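/- arXiv:2110.11472 — 6 statements merged into one kernel-verified Lean document; each statement's English description precedes it below -/
import Mathlib

section
/- (Cycle lemma, uniqueness of the admissible rotation.) For every integer n ≥ 1 and every sequence (d_1, …, d_n) of nonnegative integers with d_1 + ⋯ + d_n = n − 1, there exists exactly one index ℓ ∈ {1, …, n} such that the cyclically shifted sequence (d̃_1, …, d̃_n) := (d_ℓ, d_{ℓ+1}, …, d_n, d_1, …, d_{ℓ−1}) satisfies 1 + Σ_{i=1}^t (d̃_i − 1) > 0 for all 1 ≤ t ≤ n − 1. -/
/-!
Let `S t` be the `t`-th partial sum of the periodically extended sequence `d i - 1`. Then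
`S (k + n) = S k - 1`, and the shift by `ℓ` is admissible iff the walk `S` never drops below
`S ℓ` during the next `n - 1` steps. Two admissible starts `a < b < n` would give
`S a ≤ S b ≤ S (a + n) = S a - 1`; and the first minimiser of `S` on `[0, n)` is admissible,
because on `[n, ℓ + n)` the walk equals `S - 1` on `[0, ℓ)`, where it is `> S ℓ`.
-/

open Finset

theorem sum_range_add_of_periodic {M : Type*} [AddCommMonoid M] {f : ℕ → M} {n : ℕ}
    (hf : Function.Periodic f n) (k : ℕ) :
    ∑ i ∈ range (k + n), f i = ∑ i ∈ range k, f i + ∑ i ∈ range n, f i := by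
  induction k with
  | zero => simp
  | succ k ih =>
    rw [Nat.add_right_comm, sum_range_succ, ih, sum_range_succ, hf k, add_right_comm]

def IsAdmissible (S : ℕ → ℤ) (n ℓ : ℕ) : Prop :=
  ∀ t, 1 ≤ t → t ≤ n - 1 → S ℓ ≤ S (ℓ + t)

section Walk

variable {S : ℕ → ℤ} {n : ℕ}

theorem not_isAdmissible_of_lt (hS : ∀ k, S (k + n) < S k) {a b : ℕ} (hab : a < b)
    (hb : b < n) (ha : IsAdmissible S n a) : ¬ IsAdmissible S n b := by
  intro hb'
  have hle : S a ≤ S b := by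
    simpa [Nat.add_sub_cancel' hab.le] using ha (b - a) (by omega) (by omega)
  have hle' : S b ≤ S (a + n) := by
    simpa [show b + (a + n - b) = a + n by omega] using hb' (a + n - b) (by omega) (by omega)
  linarith [hS a]

theorem exists_isAdmissible (hn : 0 < n) (hS : ∀ k, S (k + n) = S k - 1) :
    ∃ ℓ < n, IsAdmissible S n ℓ := by
  obtain ⟨m, hm_lt, hm⟩ := exists_min_image (range n) S ⟨0, mem_range.mpr hn⟩
  have hmin : ∃ k, ∀ j < n, S k ≤ S j := ⟨m, fun j hj => hm j (mem_range.mpr hj)⟩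
  set ℓ := Nat.find hmin
  have hℓ_le : ℓ ≤ m := Nat.find_min' hmin fun j hj => hm j (mem_range.mpr hj)
  have hℓ_min : ∀ j < n, S ℓ ≤ S j := Nat.find_spec hmin
  have hℓ_first : ∀ j < ℓ, S ℓ < S j := by
    intro j hj
    have hj_not_min := Nat.find_min hmin hj
    push Not at hj_not_min
    obtain ⟨i, hi, hij⟩ := hj_not_min
    exact (hℓ_min i hi).trans_lt hij
  refine ⟨ℓ, hℓ_le.trans_lt (mem_range.mp hm_lt), fun t _ ht => ?_⟩
  rcases lt_or_ge (ℓ + t) n with h | h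
  · exact hℓ_min _ h
  · have hwrap := hS (ℓ + t - n)
    rw [Nat.sub_add_cancel h] at hwrap
    linarith [hℓ_first (ℓ + t - n) (by omega)]

theorem existsUnique_isAdmissible (hn : 0 < n) (hS : ∀ k, S (k + n) = S k - 1) :
    ∃! ℓ : Fin n, IsAdmissible S n ℓ := by
  obtain ⟨ℓ, hℓn, hℓ⟩ := exists_isAdmissible hn hS
  have hdec : ∀ k, S (k + n) < S k := fun k => by linarith [hS k]
  refine ⟨⟨ℓ, hℓn⟩, hℓ, fun b hb => Fin.ext ?_⟩
  rcases lt_trichotomy b.val ℓ with h | h | h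
  · exact absurd hℓ (not_isAdmissible_of_lt hdec h hℓn hb)
  · exact h
  · exact absurd hb (not_isAdmissible_of_lt hdec h b.isLt hℓ)

end Walk

/-- **Cycle lemma (uniqueness of the admissible rotation).**
For every `n ≥ 1` and every sequence `d 0, …, d (n-1)` of nonnegative integers summing to
`n - 1`, there is exactly one index `ℓ ∈ {0, …, n-1}` such that the cyclically shifted
sequence `d̃ i := d ((ℓ + i) % n)` satisfies `1 + ∑_{i<t} (d̃ i − 1) > 0` for all
`1 ≤ t ≤ n − 1`. -/
theorem cycle_lemma_unique_rotation (n : ℕ) (hn : 1 ≤ n) (d : ℕ → ℕ)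
    (hsum : ∑ i ∈ Finset.range n, d i = n - 1) :
    ∃! ℓ : Fin n, ∀ t : ℕ, 1 ≤ t → t ≤ n - 1 →
      0 < 1 + ∑ i ∈ Finset.range t, ((d ((ℓ.val + i) % n) : ℤ) - 1) := by
  set f : ℕ → ℤ := fun i => (d (i % n) : ℤ) - 1
  set S : ℕ → ℤ := fun t => ∑ i ∈ range t, f i
  have hf : Function.Periodic f n := fun i => by simp [f]
  have hSn : S n = -1 := by
    have hsum' : ∑ i ∈ range n, (d i : ℤ) = n - 1 := by
      rw [← Nat.cast_sum, hsum, Nat.cast_sub hn, Nat.cast_one]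
    simp only [S, f, sum_sub_distrib, sum_const, card_range, nsmul_one]
    rw [sum_congr rfl fun i hi => by rw [Nat.mod_eq_of_lt (mem_range.mp hi)], hsum']
    ring
  have hS : ∀ k, S (k + n) = S k - 1 := fun k => by
    rw [sub_eq_add_neg, ← hSn]; exact sum_range_add_of_periodic hf k
  have hshift : ∀ ℓ t, ∑ i ∈ range t, ((d ((ℓ + i) % n) : ℤ) - 1) = S (ℓ + t) - S ℓ :=
    fun ℓ t => by simp only [S, sum_range_add, f, add_sub_cancel_left]
  refine (existsUnique_congr fun ℓ => ?_).mpr (existsUnique_isAdmissible hn hS)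
  simp only [IsAdmissible, hshift]
  exact forall₃_congr fun t _ _ => by omega
end

section
/- For every n ≥ 1, P(Ξ_n = n − 1 and S_t > 0 for all 1 ≤ t ≤ n − 1) = (1/n) · P(Ξ_n = n − 1). -/
/-!
Extend a sequence `a` with `∑_{i<n} a i = n - 1` periodically and put
`W k = ∑_{i<k} (a (i % n) - 1)`, so that `W (k + n) = W k - 1`. The walk `S` of the rotation of
`a` by `r` is `S_t = 1 + W (r + t) - W r`, so it stays positive for `0 < t < n` exactly when
`W r ≤ W (r + t)` there; this singles out one `r < n`, the first minimiser of `W` on `[0, n)`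
(cycle lemma). Since the `ξ i` are i.i.d., all `n` rotations of `(ξ 0, …, ξ (n - 1))` have the
same law, so the event `Ξ_n = n - 1` splits into `n` disjoint events of equal probability, one of
which is the event on the left.
-/

open MeasureTheory ProbabilityTheory Finset

lemma sum_range_mod_add {M : Type*} [AddCommMonoid M] (f : ℕ → M) {n : ℕ} (hn : 0 < n)
    (r : ℕ) : ∑ i ∈ range n, f ((i + r) % n) = ∑ i ∈ range n, f i := by
  have : NeZero n := ⟨hn.ne'⟩
  have hshift : ∀ i : Fin n, (i + r) % n = ((i + Fin.ofNat n r : Fin n) : ℕ) :=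
    fun i => by rw [Fin.val_add, Fin.val_ofNat, Nat.add_mod_mod]
  simp only [Finset.sum_range, hshift]
  exact Equiv.sum_comp (Equiv.addRight (Fin.ofNat n r)) (fun i : Fin n => f i)

lemma injective_mod_add {n : ℕ} (hn : 0 < n) (r : ℕ) :
    Function.Injective fun k : Fin n => (k + r) % n := by
  have : NeZero n := ⟨hn.ne'⟩
  have hshift : (fun k : Fin n => (k + r) % n) = Fin.val ∘ (· + Fin.ofNat n r) := by
    funext k
    rw [Function.comp_apply, Fin.val_add, Fin.val_ofNat, Nat.add_mod_mod]
  rw [hshift]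
  exact Fin.val_injective.comp (add_left_injective _)

lemma exists_lt_forall_le_and_forall_lt {α : Type*} [LinearOrder α] (f : ℕ → α) {n : ℕ}
    (hn : 0 < n) : ∃ r < n, (∀ k < n, f r ≤ f k) ∧ ∀ k < r, f r < f k := by
  classical
  have hmin : ∃ r, r < n ∧ ∀ k < n, f r ≤ f k := by
    obtain ⟨r, hr, hle⟩ := (range n).exists_min_image f (nonempty_range_iff.mpr hn.ne')
    exact ⟨r, mem_range.mp hr, fun k hk => hle k (mem_range.mpr hk)⟩
  obtain ⟨hlt, hle⟩ := Nat.find_spec hmin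
  refine ⟨Nat.find hmin, hlt, hle, fun k hk => ?_⟩
  obtain ⟨j, hj, hjk⟩ : ∃ j < n, f j < f k := by
    simpa [hk.trans hlt] using Nat.find_min hmin hk
  exact (hle j hj).trans_lt hjk

def IsPositivePath (n : ℕ) (a : ℕ → ℕ) : Prop :=
  ∀ t : ℕ, 1 ≤ t → t ≤ n - 1 → 0 < 1 + ∑ i ∈ range t, ((a i : ℤ) - 1)

def cyclicShift {β : Type*} (n r : ℕ) (a : ℕ → β) : ℕ → β := fun i => a ((i + r) % n)

def periodicWalk (n : ℕ) (a : ℕ → ℕ) (k : ℕ) : ℤ := ∑ i ∈ range k, ((a (i % n) : ℤ) - 1)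

section CycleLemma

variable {n : ℕ} {a : ℕ → ℕ}

lemma isPositivePath_congr {b : ℕ → ℕ} (h : ∀ i < n, a i = b i) :
    IsPositivePath n a ↔ IsPositivePath n b := by
  refine forall₃_congr fun t _ ht => ?_
  rw [sum_congr rfl fun i hi => by rw [h i (by grind)]]

lemma periodicWalk_add (r t : ℕ) :
    periodicWalk n a (r + t) =
      periodicWalk n a r + ∑ i ∈ range t, ((cyclicShift n r a i : ℕ) - 1 : ℤ) := by
  rw [periodicWalk, periodicWalk, sum_range_add]
  exact congrArg _ (sum_congr rfl fun i _ => by rw [cyclicShift, add_comm i])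

lemma periodicWalk_add_period (hn : 0 < n) (ha : ∑ i ∈ range n, a i = n - 1) (k : ℕ) :
    periodicWalk n a (k + n) = periodicWalk n a k - 1 := by
  have hsum : ∑ i ∈ range n, ((a i : ℤ) - 1) = -1 := by
    rw [sum_sub_distrib, ← Nat.cast_sum, ha]
    simp only [sum_const, card_range, nsmul_one]
    omega
  rw [periodicWalk_add, sub_eq_add_neg, ← hsum]
  exact congrArg _ (sum_range_mod_add (fun j => (a j : ℤ) - 1) hn k)

lemma isPositivePath_cyclicShift_iff (r : ℕ) :
    IsPositivePath n (cyclicShift n r a) ↔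
      ∀ t, 1 ≤ t → t ≤ n - 1 → periodicWalk n a r ≤ periodicWalk n a (r + t) := by
  refine forall₃_congr fun t _ _ => ?_
  rw [periodicWalk_add]
  omega

theorem existsUnique_isPositivePath_cyclicShift (hn : 0 < n)
    (ha : ∑ i ∈ range n, a i = n - 1) :
    ∃! r, r < n ∧ IsPositivePath n (cyclicShift n r a) := by
  simp only [isPositivePath_cyclicShift_iff]
  have hS := periodicWalk_add_period hn ha
  set S := periodicWalk n a
  -- Two good starts `p < q` would give `S p ≤ S q ≤ S (p + n) = S p - 1`.
  have hnot_both : ∀ p q, p < q → q < n → (∀ t, 1 ≤ t → t ≤ n - 1 → S p ≤ S (p + t)) →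
      (∀ t, 1 ≤ t → t ≤ n - 1 → S q ≤ S (q + t)) → False := by
    intro p q hpq hqn hp hq
    have h₁ := hp (q - p) (by omega) (by omega)
    have h₂ := hq (p + n - q) (by omega) (by omega)
    rw [show p + (q - p) = q by omega] at h₁
    rw [show q + (p + n - q) = p + n by omega, hS] at h₂
    omega
  obtain ⟨r, hrn, hmin, hfirst⟩ := exists_lt_forall_le_and_forall_lt S hn
  have hr : ∀ t, 1 ≤ t → t ≤ n - 1 → S r ≤ S (r + t) := by
    intro t _ _
    rcases lt_or_ge (r + t) n with h | h
    · exact hmin _ h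
    · have := hfirst (r + t - n) (by omega)
      rw [show r + t = r + t - n + n by omega, hS]
      omega
  refine ⟨r, ⟨hrn, hr⟩, fun r' ⟨hr'n, hr'⟩ => ?_⟩
  rcases lt_trichotomy r' r with h | h | h
  · exact (hnot_both r' r h hrn hr' hr).elim
  · exact h
  · exact (hnot_both r r' h hr'n hr hr').elim

end CycleLemma

section IdentDistrib

variable {Ω ι κ β : Type*} [MeasurableSpace Ω] [MeasurableSpace β] {μ : Measure Ω}
  {ξ : ι → Ω → β} {i₀ : ι}

lemma ProbabilityTheory.iIndepFun.map_comp_eq_pi [Fintype κ] (hindep : iIndepFun ξ μ)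
    (hident : ∀ i, IdentDistrib (ξ i) (ξ i₀) μ μ) {f : κ → ι} (hf : f.Injective) :
    μ.map (fun ω k => ξ (f k) ω) = Measure.pi fun _ => μ.map (ξ i₀) := by
  rw [(hindep.precomp hf).map_fun_eq_pi_map fun k => (hident (f k)).aemeasurable_fst]
  simp only [(hident _).map_eq]

lemma ProbabilityTheory.iIndepFun.identDistrib_comp [Fintype κ] (hindep : iIndepFun ξ μ)
    (hident : ∀ i, IdentDistrib (ξ i) (ξ i₀) μ μ) {f g : κ → ι} (hf : f.Injective)
    (hg : g.Injective) :
    IdentDistrib (fun ω k => ξ (f k) ω) (fun ω k => ξ (g k) ω) μ μ where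
  aemeasurable_fst := aemeasurable_pi_lambda _ fun k => (hident (f k)).aemeasurable_fst
  aemeasurable_snd := aemeasurable_pi_lambda _ fun k => (hident (g k)).aemeasurable_fst
  map_eq := by rw [hindep.map_comp_eq_pi hident hf, hindep.map_comp_eq_pi hident hg]

end IdentDistrib

lemma setOf_cyclicShift_mem_eq_preimage {Ω β : Type*} {ξ : ℕ → Ω → β} {n : ℕ} (hn : 0 < n)
    (r : ℕ) (s : Set (ℕ → β)) :
    {ω | cyclicShift n r (ξ · ω) ∈ s} =
      (fun ω (k : Fin n) => ξ ((k + r) % n) ω) ⁻¹'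
        {v | (fun i => v ⟨i % n, Nat.mod_lt i hn⟩) ∈ s} := by
  ext ω
  simp only [Set.mem_ofPred_eq, Set.mem_preimage, Nat.mod_add_mod]
  rfl

section CyclicExchangeability

variable {Ω β : Type*} [MeasurableSpace Ω] [MeasurableSpace β] [Countable β]
  [MeasurableSingletonClass β] {μ : Measure Ω} {ξ : ℕ → Ω → β} {n : ℕ}

lemma measure_setOf_cyclicShift_mem (hindep : iIndepFun ξ μ)
    (hident : ∀ i, IdentDistrib (ξ i) (ξ 0) μ μ) (hn : 0 < n) (r : ℕ) (s : Set (ℕ → β)) :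
    μ {ω | cyclicShift n r (ξ · ω) ∈ s} = μ {ω | cyclicShift n 0 (ξ · ω) ∈ s} := by
  rw [setOf_cyclicShift_mem_eq_preimage hn, setOf_cyclicShift_mem_eq_preimage hn]
  exact (hindep.identDistrib_comp hident (injective_mod_add hn r)
    (injective_mod_add hn 0)).measure_mem_eq (Set.to_countable _).measurableSet

lemma nullMeasurableSet_setOf_cyclicShift_mem (hident : ∀ i, IdentDistrib (ξ i) (ξ 0) μ μ)
    (hn : 0 < n) (r : ℕ) (s : Set (ℕ → β)) :
    NullMeasurableSet {ω | cyclicShift n r (ξ · ω) ∈ s} μ := by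
  rw [setOf_cyclicShift_mem_eq_preimage hn]
  exact (aemeasurable_pi_lambda _ fun k => (hident _).aemeasurable_fst).nullMeasurableSet_preimage
    (Set.to_countable _).measurableSet

lemma measure_eq_mul_of_existsUnique_cyclicShift_mem (hindep : iIndepFun ξ μ)
    (hident : ∀ i, IdentDistrib (ξ i) (ξ 0) μ μ) (hn : 0 < n) {s t : Set (ℕ → β)}
    (hts : ∀ a ∈ t, ∃! r, r < n ∧ cyclicShift n r a ∈ s)
    (hst : ∀ a, ∀ r < n, cyclicShift n r a ∈ s → a ∈ t) :
    μ {ω | (ξ · ω) ∈ t} = n * μ {ω | cyclicShift n 0 (ξ · ω) ∈ s} := by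
  have hunion : {ω | (ξ · ω) ∈ t} = ⋃ r ∈ range n, {ω | cyclicShift n r (ξ · ω) ∈ s} := by
    ext ω
    simp only [Set.mem_ofPred_eq, Set.mem_iUnion, mem_range, exists_prop]
    exact ⟨fun h => (hts _ h).exists, fun ⟨r, hr, h⟩ => hst _ r hr h⟩
  have hdisj : (range n : Set ℕ).PairwiseDisjoint
      fun r => {ω | cyclicShift n r (ξ · ω) ∈ s} := by
    intro r hr r' hr' hne
    refine Set.disjoint_left.mpr fun ω hω hω' => hne ?_
    have hr : r < n := mem_range.mp hr
    exact (hts _ (hst _ r hr hω)).unique ⟨hr, hω⟩ ⟨mem_range.mp hr', hω'⟩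
  rw [hunion, measure_biUnion_finset₀ hdisj.aedisjoint
    fun r _ => nullMeasurableSet_setOf_cyclicShift_mem hident hn r s,
    sum_congr rfl fun r _ => measure_setOf_cyclicShift_mem hindep hident hn r s]
  simp

end CyclicExchangeability

theorem prob_degree_seq_with_positivity_eq_inv_n_mul_general
    {Ω : Type*} [MeasurableSpace Ω] (μ : Measure Ω)
    (ξ : ℕ → Ω → ℕ)
    (hindep : iIndepFun ξ μ)
    (hident : ∀ i, IdentDistrib (ξ i) (ξ 0) μ μ)
    (n : ℕ) (hn : 1 ≤ n) :
    μ {ω | (∑ i ∈ range n, ξ i ω) = n - 1 ∧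
        ∀ t : ℕ, 1 ≤ t → t ≤ n - 1 →
          0 < 1 + ∑ i ∈ range t, ((ξ i ω : ℤ) - 1)} =
    (n : ENNReal)⁻¹ * μ {ω | (∑ i ∈ range n, ξ i ω) = n - 1} := by
  set G : Set (ℕ → ℕ) := {a | ∑ i ∈ range n, a i = n - 1 ∧ IsPositivePath n a}
  have hsum (a : ℕ → ℕ) (r : ℕ) :
      ∑ i ∈ range n, cyclicShift n r a i = ∑ i ∈ range n, a i :=
    sum_range_mod_add a hn r
  have hcount : μ {ω | (∑ i ∈ range n, ξ i ω) = n - 1} =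
      n * μ {ω | cyclicShift n 0 (ξ · ω) ∈ G} :=
    measure_eq_mul_of_existsUnique_cyclicShift_mem (t := {a | ∑ i ∈ range n, a i = n - 1})
      hindep hident hn
      (fun a (ha : ∑ i ∈ range n, a i = n - 1) => by
        simpa only [G, Set.mem_ofPred_eq, hsum, ha, true_and] using
          existsUnique_isPositivePath_cyclicShift hn ha)
      (fun a r _ h => (hsum a r).symm.trans h.1)
  have hzero (a : ℕ → ℕ) : cyclicShift n 0 a ∈ G ↔ a ∈ G :=
    and_congr (by rw [hsum])
      (isPositivePath_congr fun i hi => by rw [cyclicShift, add_zero, Nat.mod_eq_of_lt hi])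
  simp only [hzero] at hcount
  rw [hcount, ← mul_assoc, ENNReal.inv_mul_cancel (by positivity) (ENNReal.natCast_ne_top n),
    one_mul]
  rfl

/-- Let `ξ 0, ξ 1, …` be i.i.d. nonnegative-integer-valued random variables,
`Ξ_n := ξ 1 + ⋯ + ξ n` (here `∑ i ∈ range n, ξ i`) and
`S_t := 1 + ∑_{i=1}^t (ξ_i − 1)`.  Then for every `n ≥ 1`,
`P(Ξ_n = n − 1 and S_t > 0 for all 1 ≤ t ≤ n − 1) = (1/n) · P(Ξ_n = n − 1)`. -/
theorem prob_degree_seq_with_positivity_eq_inv_n_mul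
    {Ω : Type*} [MeasurableSpace Ω] (μ : Measure Ω) [IsProbabilityMeasure μ]
    (ξ : ℕ → Ω → ℕ) (hmeas : ∀ i, Measurable (ξ i))
    (hindep : iIndepFun ξ μ)
    (hident : ∀ i, IdentDistrib (ξ i) (ξ 0) μ μ)
    (n : ℕ) (hn : 1 ≤ n) :
    μ {ω | (∑ i ∈ range n, ξ i ω) = n - 1 ∧
        ∀ t : ℕ, 1 ≤ t → t ≤ n - 1 →
          0 < 1 + ∑ i ∈ range t, ((ξ i ω : ℤ) - 1)} =
    (n : ENNReal)⁻¹ * μ {ω | (∑ i ∈ range n, ξ i ω) = n - 1} :=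
  prob_degree_seq_with_positivity_eq_inv_n_mul_general μ ξ hindep hident n hn
end

section
/- (Radius of convergence of the partition function of simply generated trees.) Under the stated assumptions, the radius of convergence ρ_Z of Z satisfies 0 < ρ_Z < ∞, the value τ := Σ_{n≥1} Z_n ρ_Z^n is finite and strictly positive, Φ(τ) is finite and strictly positive, and ρ_Z = τ / Φ(τ). -/
open scoped ENNReal

/-- The radius of convergence (in `[0,∞]`) of the power series with real
coefficients `a 0, a 1, a 2, …`: the supremum of all `r ≥ 0` at which
`∑ a n * r ^ n` converges. -/
noncomputable def radiusOfCoeff (a : ℕ → ℝ) : ℝ≥0∞ :=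
  ⨆ (r : NNReal) (_ : Summable fun n => a n * (r : ℝ) ^ n), (r : ℝ≥0∞)

/-!
Write `Z(x) = ∑ Z_n x^n` and `Φ(y) = ∑ w_k y^k` for `x, y ≥ 0`. Since all coefficients are
nonnegative, the formal identity `Z = X Φ(Z)` becomes `Z(x) = x Φ(Z(x))` whenever `Z(x)`
converges (a rearrangement of a double series of nonnegative terms). Truncating the identity
shows that the partial sums of `Z(x)` stay below any `s` with `x Φ(s) ≤ s`, so `Z` has a positive
radius of convergence `ρ`. On the other hand `Z(x) ≥ w₀ x` and `Z(x) ≥ x w_a Z(x)^a` with `a ≥ 2`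
bound both `x` and `Z(x)` on the region of convergence; hence `ρ < ∞` and `Z(x)` stays bounded
as `x ↑ ρ`, so `Z` converges at `ρ` itself, where the functional equation gives `ρ = τ / Φ(τ)`.
-/

open Finset PowerSeries Topology

section RadiusOfCoeff

variable {a : ℕ → ℝ}

lemma le_radiusOfCoeff_of_summable {x : ℝ} (hx : 0 ≤ x)
    (h : Summable fun n => a n * x ^ n) :
    ENNReal.ofReal x ≤ radiusOfCoeff a :=
  le_iSup₂_of_le x.toNNReal (by rwa [Real.coe_toNNReal x hx]) le_rfl

lemma radiusOfCoeff_le {C : ℝ}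
    (h : ∀ x : ℝ, 0 ≤ x → (Summable fun n => a n * x ^ n) → x ≤ C) :
    radiusOfCoeff a ≤ ENNReal.ofReal C :=
  iSup₂_le fun r hr => by
    simpa only [ENNReal.ofReal_coe_nnreal] using ENNReal.ofReal_le_ofReal (h r r.2 hr)

lemma exists_lt_summable_of_lt_radiusOfCoeff {x : ℝ≥0∞} (h : x < radiusOfCoeff a) :
    ∃ r : NNReal, x < r ∧ Summable fun n => a n * (r : ℝ) ^ n := by
  obtain ⟨r, hr⟩ := lt_iSup_iff.1 h
  obtain ⟨hsum, hxr⟩ := lt_iSup_iff.1 hr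
  exact ⟨r, hxr, hsum⟩

lemma summable_of_lt_radiusOfCoeff (ha : ∀ n, 0 ≤ a n) {x : ℝ} (hx : 0 ≤ x)
    (h : ENNReal.ofReal x < radiusOfCoeff a) : Summable fun n => a n * x ^ n := by
  obtain ⟨r, hxr, hsum⟩ := exists_lt_summable_of_lt_radiusOfCoeff h
  have hxr : x ≤ r := ((ENNReal.ofReal_lt_coe_iff hx).1 hxr).le
  exact hsum.of_nonneg_of_le (fun n => mul_nonneg (ha n) (pow_nonneg hx n))
    fun n => mul_le_mul_of_nonneg_left (pow_le_pow_left₀ hx hxr n) (ha n)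

end RadiusOfCoeff

lemma summable_mul_pow_of_eventually_tsum_le {a : ℕ → ℝ} (ha : ∀ n, 0 ≤ a n) {ρ B : ℝ}
    (hρ : 0 < ρ)
    (h : ∀ᶠ r in 𝓝[<] ρ, (Summable fun n => a n * r ^ n) ∧ ∑' n, a n * r ^ n ≤ B) :
    Summable fun n => a n * ρ ^ n := by
  refine summable_of_sum_range_le (c := B) (fun n => mul_nonneg (ha n) (pow_nonneg hρ.le n))
    fun N => ?_
  have hcont : Continuous fun r : ℝ => ∑ n ∈ range N, a n * r ^ n := by fun_prop
  refine le_of_tendsto ((hcont.tendsto ρ).mono_left (nhdsWithin_le_nhds (s := Set.Iio ρ))) ?_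
  filter_upwards [h, Ioo_mem_nhdsLT hρ] with r ⟨hsum, hle⟩ ⟨hr0, _⟩
  exact (hsum.sum_le_tsum _ fun n _ => mul_nonneg (ha n) (pow_nonneg hr0.le n)).trans hle

namespace PowerSeries

lemma coeff_pow_eq_zero_of_lt {R : Type*} [CommSemiring R] {φ : PowerSeries R}
    (hφ : constantCoeff φ = 0) {n k : ℕ} (h : n < k) : coeff n (φ ^ k) = 0 :=
  coeff_of_lt_order n ((Nat.cast_lt.2 h).trans_le (le_order_pow_of_constantCoeff_eq_zero k hφ))

variable {S T : PowerSeries ℝ} {x s t : ℝ}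

lemma coeff_pow_nonneg (hS : ∀ n, 0 ≤ coeff n S) (k n : ℕ) : 0 ≤ coeff n (S ^ k) := by
  rw [coeff_pow]
  exact sum_nonneg fun l _ => prod_nonneg fun i _ => hS (l i)

lemma hasSum_coeff_mul_mul_pow (hS : ∀ n, 0 ≤ coeff n S) (hT : ∀ n, 0 ≤ coeff n T)
    (hx : 0 ≤ x) (hs : HasSum (fun n => coeff n S * x ^ n) s)
    (ht : HasSum (fun n => coeff n T * x ^ n) t) :
    HasSum (fun n => coeff n (S * T) * x ^ n) (s * t) := by
  have hST := hs.summable.mul_of_nonneg ht.summable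
    (fun n => mul_nonneg (hS n) (pow_nonneg hx n)) (fun n => mul_nonneg (hT n) (pow_nonneg hx n))
  have hcoeff : ∀ n, coeff n (S * T) * x ^ n =
      ∑ p ∈ antidiagonal n, coeff p.1 S * x ^ p.1 * (coeff p.2 T * x ^ p.2) := fun n => by
    rw [coeff_mul, sum_mul]
    refine sum_congr rfl fun p hp => ?_
    rw [← mem_antidiagonal.1 hp, pow_add]
    ring
  have hprod := summable_sum_mul_antidiagonal_of_summable_mul
    (f := fun n => coeff n S * x ^ n) (g := fun n => coeff n T * x ^ n) hST
  rw [← hs.tsum_eq, ← ht.tsum_eq,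
    hs.summable.tsum_mul_tsum_eq_tsum_sum_antidiagonal ht.summable hST]
  simpa only [hcoeff] using hprod.hasSum

lemma hasSum_coeff_pow_mul_pow (hS : ∀ n, 0 ≤ coeff n S) (hx : 0 ≤ x)
    (hs : HasSum (fun n => coeff n S * x ^ n) s) (k : ℕ) :
    HasSum (fun n => coeff n (S ^ k) * x ^ n) (s ^ k) := by
  induction k with
  | zero =>
    rw [pow_zero, pow_zero]
    convert hasSum_single (f := fun n => coeff n (1 : PowerSeries ℝ) * x ^ n) 0 fun n hn => by
      simp [coeff_one, hn]
    simp
  | succ k ih =>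
    rw [pow_succ, pow_succ]
    exact hasSum_coeff_mul_mul_pow (coeff_pow_nonneg hS k) hS hx ih hs

lemma sum_range_coeff_pow_mul_pow_le (hS : ∀ n, 0 ≤ coeff n S) (hx : 0 ≤ x) (N k : ℕ) :
    ∑ n ∈ range N, coeff n (S ^ k) * x ^ n ≤ (∑ n ∈ range N, coeff n S * x ^ n) ^ k := by
  set P : PowerSeries ℝ := ↑(trunc N S)
  have hP : ∀ n, 0 ≤ coeff n P := fun n => by
    simp only [P, Polynomial.coeff_coe, coeff_trunc]
    split_ifs
    exacts [hS n, le_rfl]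
  have hPsum : HasSum (fun n => coeff n P * x ^ n) (∑ n ∈ range N, coeff n S * x ^ n) := by
    rw [← sum_congr rfl fun n hn => by rw [← coeff_coe_trunc_of_lt (mem_range.1 hn)]]
    exact hasSum_sum_of_ne_finset_zero fun n hn => by
      simp [P, Polynomial.coeff_coe, coeff_trunc, mem_range.not.1 hn]
  -- below degree `N`, the coefficients of `S ^ k` only see the truncation `P` of `S`
  have hlow : ∀ n ∈ range N, coeff n (S ^ k) = coeff n (P ^ k) := fun n hn => by
    rw [← coeff_coe_trunc_of_lt (mem_range.1 hn), ← trunc_trunc_pow,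
      coeff_coe_trunc_of_lt (mem_range.1 hn)]
  rw [sum_congr rfl fun n hn => by rw [hlow n hn]]
  exact sum_le_hasSum _ (fun n _ => mul_nonneg (coeff_pow_nonneg hP k n) (pow_nonneg hx n))
    (hasSum_coeff_pow_mul_pow hP hx hPsum k)

end PowerSeries

/-- `Z = X · Φ(Z)` coefficientwise, where `Φ = ∑ w k X ^ k`. -/
structure IsTreeSeries (w : ℕ → ℝ) (Z : PowerSeries ℝ) : Prop where
  constantCoeff_eq_zero : constantCoeff Z = 0
  coeff_succ : ∀ n : ℕ, coeff (n + 1) Z = ∑' k : ℕ, w k * coeff n (Z ^ k)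

namespace IsTreeSeries

variable {w : ℕ → ℝ} {Z : PowerSeries ℝ} {x t : ℝ}

lemma hasSum_coeff_succ (hZ : IsTreeSeries w Z) (n : ℕ) :
    HasSum (fun k => w k * coeff n (Z ^ k)) (coeff (n + 1) Z) := by
  rw [hZ.coeff_succ n]
  refine (hasSum_sum_of_ne_finset_zero (s := range (n + 1)) fun k hk => ?_).summable.hasSum
  rw [coeff_pow_eq_zero_of_lt hZ.constantCoeff_eq_zero (by simpa using hk), mul_zero]

lemma coeff_one (hZ : IsTreeSeries w Z) : coeff 1 Z = w 0 := by
  have h := hasSum_single (f := fun k => w k * coeff 0 (Z ^ k)) 0 fun k hk => by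
    rw [coeff_pow_eq_zero_of_lt hZ.constantCoeff_eq_zero (Nat.pos_of_ne_zero hk), mul_zero]
  simpa using (hZ.hasSum_coeff_succ 0).unique h

lemma hasSum_weight_mul_pow (hZ : IsTreeSeries w Z) (hw : ∀ k, 0 ≤ w k)
    (hZnn : ∀ n, 0 ≤ coeff n Z) (hx : 0 < x) (ht : HasSum (fun n => coeff n Z * x ^ n) t) :
    HasSum (fun k => w k * t ^ k) (t / x) := by
  -- `g (m, k)` is the part of `coeff (m + 1) Z * x ^ m` coming from `w k Z ^ k`: its rows sum
  -- to `Z(x) / x` and its columns to the terms of `Φ(Z(x))`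
  set g : ℕ × ℕ → ℝ := fun p => w p.2 * coeff p.1 (Z ^ p.2) * x ^ p.1
  have hg : 0 ≤ g := fun p =>
    mul_nonneg (mul_nonneg (hw _) (coeff_pow_nonneg hZnn _ _)) (pow_nonneg hx.le _)
  have hrow : ∀ m, HasSum (fun k => g (m, k)) (coeff (m + 1) Z * x ^ m) := fun m =>
    (hZ.hasSum_coeff_succ m).mul_right _
  have hcol : ∀ k, HasSum (fun m => g (m, k)) (w k * t ^ k) := fun k => by
    simpa only [g, mul_assoc] using (hasSum_coeff_pow_mul_pow hZnn hx.le ht k).mul_left (w k)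
  have hshift : HasSum (fun m => coeff (m + 1) Z * x ^ m) (t / x) := by
    have h := ((hasSum_nat_add_iff' 1).2 ht).div_const x
    simp only [sum_range_one, coeff_zero_eq_constantCoeff_apply, hZ.constantCoeff_eq_zero,
      zero_mul, sub_zero] at h
    refine h.congr_fun fun m => ?_
    rw [pow_succ, ← mul_assoc, mul_div_cancel_right₀ _ hx.ne']
  have hsum : Summable g := (summable_prod_of_nonneg hg).2
    ⟨fun m => (hrow m).summable, by simpa only [(hrow _).tsum_eq] using hshift.summable⟩
  have hg_sum : HasSum g (t / x) := by
    rw [← (hsum.hasSum.prod_fiberwise hrow).unique hshift]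
    exact hsum.hasSum
  exact ((Equiv.prodComm ℕ ℕ).hasSum_iff.2 hg_sum).prod_fiberwise hcol

lemma sum_range_succ_le (hZ : IsTreeSeries w Z) (hw : ∀ k, 0 ≤ w k)
    (hZnn : ∀ n, 0 ≤ coeff n Z) {s : ℝ} (hx : 0 ≤ x) (hs : Summable fun k => w k * s ^ k)
    {N : ℕ} (hN : ∑ n ∈ range N, coeff n Z * x ^ n ≤ s) :
    ∑ n ∈ range (N + 1), coeff n Z * x ^ n ≤ x * ∑' k, w k * s ^ k := by
  have hsum : HasSum (fun k => w k * ∑ m ∈ range N, coeff m (Z ^ k) * x ^ m)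
      (∑ m ∈ range N, coeff (m + 1) Z * x ^ m) := by
    simp only [mul_sum, ← mul_assoc]
    exact hasSum_sum fun m _ => (hZ.hasSum_coeff_succ m).mul_right _
  have hN0 : 0 ≤ ∑ n ∈ range N, coeff n Z * x ^ n :=
    sum_nonneg fun n _ => mul_nonneg (hZnn n) (pow_nonneg hx n)
  have hle : ∀ k, w k * ∑ m ∈ range N, coeff m (Z ^ k) * x ^ m ≤ w k * s ^ k := fun k =>
    mul_le_mul_of_nonneg_left ((sum_range_coeff_pow_mul_pow_le hZnn hx N k).trans
      (pow_le_pow_left₀ hN0 hN k)) (hw k)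
  calc ∑ n ∈ range (N + 1), coeff n Z * x ^ n
      = x * ∑ m ∈ range N, coeff (m + 1) Z * x ^ m := by
        simp only [sum_range_succ', coeff_zero_eq_constantCoeff_apply, hZ.constantCoeff_eq_zero,
          zero_mul, add_zero, mul_sum, pow_succ]
        exact sum_congr rfl fun m _ => by ring
    _ ≤ x * ∑' k, w k * s ^ k := mul_le_mul_of_nonneg_left (hasSum_le hle hsum hs.hasSum) hx

lemma summable_of_mul_tsum_le (hZ : IsTreeSeries w Z) (hw : ∀ k, 0 ≤ w k)
    (hZnn : ∀ n, 0 ≤ coeff n Z) {s : ℝ} (hx : 0 ≤ x) (hs0 : 0 ≤ s)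
    (hs : Summable fun k => w k * s ^ k) (hxs : x * ∑' k, w k * s ^ k ≤ s) :
    Summable fun n => coeff n Z * x ^ n := by
  refine summable_of_sum_range_le (c := s) (fun n => mul_nonneg (hZnn n) (pow_nonneg hx n))
    fun N => ?_
  induction N with
  | zero => simpa using hs0
  | succ N ih => exact (hZ.sum_range_succ_le hw hZnn hx hs ih).trans hxs

lemma mul_le_of_hasSum (hZ : IsTreeSeries w Z) (hZnn : ∀ n, 0 ≤ coeff n Z) (hx : 0 ≤ x)
    (ht : HasSum (fun n => coeff n Z * x ^ n) t) : w 0 * x ≤ t := by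
  simpa [hZ.coeff_one] using le_hasSum ht 1 fun n _ => mul_nonneg (hZnn n) (pow_nonneg hx n)

lemma le_max_of_hasSum (hZ : IsTreeSeries w Z) (hw : ∀ k, 0 ≤ w k)
    (hZnn : ∀ n, 0 ≤ coeff n Z) {a : ℕ} (ha : 2 ≤ a) (hwa : 0 < w a) (hx : 0 < x)
    (ht : HasSum (fun n => coeff n Z * x ^ n) t) : t ≤ max 1 (1 / (x * w a)) := by
  rcases le_or_gt t 1 with ht1 | ht1
  · exact le_max_of_le_left ht1
  refine le_max_of_le_right ?_
  -- `x w_a t ^ 2 ≤ x w_a t ^ a ≤ x Φ(t) = t`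
  have hterm : w a * t ^ a ≤ t / x := le_hasSum (hZ.hasSum_weight_mul_pow hw hZnn hx ht) a
    fun k _ => mul_nonneg (hw k) (pow_nonneg (by linarith) k)
  have hpow : t ^ 2 ≤ t ^ a := pow_le_pow_right₀ ht1.le ha
  rw [le_div_iff₀ hx] at hterm
  rw [le_div_iff₀ (mul_pos hx hwa)]
  have h2 : t * (t * (x * w a)) ≤ t * 1 := by
    nlinarith [mul_le_mul_of_nonneg_left hpow (mul_pos hwa hx).le]
  exact le_of_mul_le_mul_left h2 (by linarith)

lemma le_max_of_summable (hZ : IsTreeSeries w Z) (hw : ∀ k, 0 ≤ w k) (hw0 : 0 < w 0)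
    (hZnn : ∀ n, 0 ≤ coeff n Z) {a : ℕ} (ha : 2 ≤ a) (hwa : 0 < w a) (hx : 0 ≤ x)
    (hsum : Summable fun n => coeff n Z * x ^ n) : x ≤ max (1 / w 0) (1 / w a) := by
  by_contra! h
  rw [max_lt_iff, div_lt_iff₀ hw0, div_lt_iff₀ hwa] at h
  have hx0 : 0 < x := by nlinarith
  have hlow := hZ.mul_le_of_hasSum hZnn hx hsum.hasSum
  have hup := hZ.le_max_of_hasSum hw hZnn ha hwa hx0 hsum.hasSum
  rw [max_eq_left ((div_le_one (mul_pos hx0 hwa)).2 (by linarith))] at hup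
  linarith

lemma radiusOfCoeff_pos (hZ : IsTreeSeries w Z) (hw : ∀ k, 0 ≤ w k) (hw0 : 0 < w 0)
    (hZnn : ∀ n, 0 ≤ coeff n Z) (hρ : 0 < radiusOfCoeff w) :
    0 < radiusOfCoeff fun n => coeff n Z := by
  obtain ⟨s, hs_pos, hs⟩ := exists_lt_summable_of_lt_radiusOfCoeff hρ
  have hs0 : (0 : ℝ) < s := by exact_mod_cast hs_pos
  have hΦ0 : 0 < ∑' k, w k * (s : ℝ) ^ k := hw0.trans_le <| by
    simpa using hs.le_tsum 0 fun k _ => mul_nonneg (hw k) (pow_nonneg hs0.le k)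
  have hx0 : 0 < (s : ℝ) / ∑' k, w k * (s : ℝ) ^ k := div_pos hs0 hΦ0
  have hsum := hZ.summable_of_mul_tsum_le hw hZnn hx0.le hs0.le hs
    (div_mul_cancel₀ _ hΦ0.ne').le
  exact (ENNReal.ofReal_pos.2 hx0).trans_le (le_radiusOfCoeff_of_summable hx0.le hsum)

lemma radiusOfCoeff_lt_top (hZ : IsTreeSeries w Z) (hw : ∀ k, 0 ≤ w k) (hw0 : 0 < w 0)
    (hZnn : ∀ n, 0 ≤ coeff n Z) {a : ℕ} (ha : 2 ≤ a) (hwa : 0 < w a) :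
    radiusOfCoeff (fun n => coeff n Z) < ⊤ :=
  (radiusOfCoeff_le fun _ hx hsum => hZ.le_max_of_summable hw hw0 hZnn ha hwa hx hsum).trans_lt
    ENNReal.ofReal_lt_top

lemma summable_toReal_radiusOfCoeff (hZ : IsTreeSeries w Z) (hw : ∀ k, 0 ≤ w k)
    (hZnn : ∀ n, 0 ≤ coeff n Z) {a : ℕ} (ha : 2 ≤ a) (hwa : 0 < w a)
    (hR0 : 0 < radiusOfCoeff fun n => coeff n Z) (hR : radiusOfCoeff (fun n => coeff n Z) < ⊤) :
    Summable fun n => coeff n Z * (radiusOfCoeff fun m => coeff m Z).toReal ^ n := by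
  set ρ := (radiusOfCoeff fun m => coeff m Z).toReal
  have hρ : 0 < ρ := ENNReal.toReal_pos hR0.ne' hR.ne
  refine summable_mul_pow_of_eventually_tsum_le hZnn hρ (B := max 1 (2 / (ρ * w a))) ?_
  filter_upwards [Ioo_mem_nhdsLT (half_lt_self hρ)] with r ⟨hr1, hr2⟩
  have hr0 : 0 < r := (half_pos hρ).trans hr1
  have hsum := summable_of_lt_radiusOfCoeff hZnn hr0.le
    ((ENNReal.ofReal_lt_iff_lt_toReal hr0.le hR.ne).2 hr2)
  refine ⟨hsum, (hZ.le_max_of_hasSum hw hZnn ha hwa hr0 hsum.hasSum).trans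
    (max_le_max le_rfl ?_)⟩
  rw [div_le_div_iff₀ (mul_pos hr0 hwa) (mul_pos hρ hwa)]
  nlinarith

end IsTreeSeries

/-- **Radius of convergence of the partition function of simply generated trees.**
Let `w = (w k)` be nonnegative with `w 0 > 0` and `w k > 0` for some `k ≥ 2`, let
`Φ(x) = ∑ w k x^k` have positive radius of convergence, and let `Z` be the formal power
series with zero constant term satisfying `Z = x·Φ(Z)` (coefficientwise:
`Z_{n+1} = ∑' k, w k · [x^n] Z^k`), with nonnegative coefficients.  Then the radius of
convergence `ρ_Z` of `Z` satisfies `0 < ρ_Z < ∞`, the value `τ := ∑ Z_n ρ_Z^n` is finite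
and strictly positive, `Φ(τ)` is finite and strictly positive, and `ρ_Z = τ / Φ(τ)`. -/
theorem radius_partition_function_simply_generated_trees
    (w : ℕ → ℝ) (hw : ∀ k, 0 ≤ w k) (hw0 : 0 < w 0) (hw2 : ∃ k, 2 ≤ k ∧ 0 < w k)
    (hρ : 0 < radiusOfCoeff w)
    (Z : PowerSeries ℝ) (hZ0 : PowerSeries.constantCoeff (R := ℝ) Z = 0)
    (hZeq : ∀ n : ℕ, PowerSeries.coeff (R := ℝ) (n + 1) Z =
      ∑' k : ℕ, w k * PowerSeries.coeff (R := ℝ) n (Z ^ k))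
    (hZnn : ∀ n : ℕ, 0 ≤ PowerSeries.coeff (R := ℝ) n Z) :
    0 < radiusOfCoeff (fun n => PowerSeries.coeff (R := ℝ) n Z) ∧
    radiusOfCoeff (fun n => PowerSeries.coeff (R := ℝ) n Z) < ⊤ ∧
    Summable (fun n => PowerSeries.coeff (R := ℝ) n Z *
      (radiusOfCoeff fun m => PowerSeries.coeff (R := ℝ) m Z).toReal ^ n) ∧
    0 < (∑' n : ℕ, PowerSeries.coeff (R := ℝ) n Z *
      (radiusOfCoeff fun m => PowerSeries.coeff (R := ℝ) m Z).toReal ^ n) ∧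
    Summable (fun k => w k * (∑' n : ℕ, PowerSeries.coeff (R := ℝ) n Z *
      (radiusOfCoeff fun m => PowerSeries.coeff (R := ℝ) m Z).toReal ^ n) ^ k) ∧
    0 < (∑' k : ℕ, w k * (∑' n : ℕ, PowerSeries.coeff (R := ℝ) n Z *
      (radiusOfCoeff fun m => PowerSeries.coeff (R := ℝ) m Z).toReal ^ n) ^ k) ∧
    (radiusOfCoeff fun m => PowerSeries.coeff (R := ℝ) m Z).toReal =
      (∑' n : ℕ, PowerSeries.coeff (R := ℝ) n Z *
        (radiusOfCoeff fun m => PowerSeries.coeff (R := ℝ) m Z).toReal ^ n) /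
      (∑' k : ℕ, w k * (∑' n : ℕ, PowerSeries.coeff (R := ℝ) n Z *
        (radiusOfCoeff fun m => PowerSeries.coeff (R := ℝ) m Z).toReal ^ n) ^ k) := by
  obtain ⟨a, ha, hwa⟩ := hw2
  have hZ : IsTreeSeries w Z := ⟨hZ0, hZeq⟩
  have hR0 := hZ.radiusOfCoeff_pos hw hw0 hZnn hρ
  have hR := hZ.radiusOfCoeff_lt_top hw hw0 hZnn ha hwa
  have hρ0 : 0 < (radiusOfCoeff fun m => coeff m Z).toReal := ENNReal.toReal_pos hR0.ne' hR.ne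
  have hτ := hZ.summable_toReal_radiusOfCoeff hw hZnn ha hwa hR0 hR
  have hΦ := hZ.hasSum_weight_mul_pow hw hZnn hρ0 hτ.hasSum
  have hτ0 := (mul_pos hw0 hρ0).trans_le (hZ.mul_le_of_hasSum hZnn hρ0.le hτ.hasSum)
  refine ⟨hR0, hR, hτ, hτ0, hΦ.summable, ?_, ?_⟩ <;> rw [hΦ.tsum_eq]
  · positivity
  · field_simp
end

section
/- (Tilted weight sequence is a critical offspring distribution with exponential moments.) Suppose additionally that 0 < τ < ρ, where ρ is the radius of convergence of Φ. Then the sequence π_k := ω_k τ^k / Φ(τ) (k ∈ ℕ₀) is a probability distribution on ℕ₀, it has mean one, i.e. Σ_{k≥0} k π_k = 1 (equivalently τ Φ′(τ) = Φ(τ)), and there exists ε > 0 such that Σ_{k≥0} π_k (1 + ε)^k < ∞. -/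
/-!
Write `Φ(s) = ∑ w_k s^k` and `r = ρ_Z`. Pushing partial sums through `Z = xΦ(Z)` shows that at
`t = s / Φ(s)` every partial sum of `Z(t)` stays below `s`, so `t ≤ r`, i.e. `s ≤ r Φ(s)` wherever
`Φ(s)` converges. Evaluating the functional equation at `r` gives `r Φ(τ) ≤ τ`, hence `τ = r Φ(τ)`:
the line `s ↦ s / r` lies below the graph of `Φ` and touches it at the interior point `τ`, so it is
tangent there and `τ Φ'(τ) = Φ(τ)`. Any `R ∈ (τ, ρ)` gives exponential moments with `1 + ε = R / τ`.
-/

open scoped ENNReal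

open Finset PowerSeries Filter Topology

theorem ofReal_le_radiusOfCoeff {a : ℕ → ℝ} {t : ℝ} (ht : 0 ≤ t)
    (h : Summable fun n => a n * t ^ n) : ENNReal.ofReal t ≤ radiusOfCoeff a := by
  refine le_iSup₂_of_le t.toNNReal ?_ le_rfl
  simpa [Real.coe_toNNReal t ht] using h

theorem exists_summable_of_ofReal_lt_radiusOfCoeff {a : ℕ → ℝ} {s : ℝ}
    (h : ENNReal.ofReal s < radiusOfCoeff a) :
    ∃ R : ℝ, s < R ∧ Summable fun n => a n * R ^ n := by
  simp only [radiusOfCoeff, lt_iSup_iff] at h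
  obtain ⟨R, hR, hlt⟩ := h
  rw [← ENNReal.ofReal_coe_nnreal, ENNReal.ofReal_lt_ofReal_iff'] at hlt
  exact ⟨R, hlt.1, hR⟩

section WeightSeries

variable {w : ℕ → ℝ} {s : ℝ}

theorem summable_mul_pow_of_mem_Icc (hw : ∀ k, 0 ≤ w k) {R : ℝ}
    (hR : Summable fun k => w k * R ^ k) (hs : s ∈ Set.Icc 0 R) : Summable fun k => w k * s ^ k :=
  hR.of_nonneg_of_le (fun k => mul_nonneg (hw k) (pow_nonneg hs.1 k))
    fun k => mul_le_mul_of_nonneg_left (pow_le_pow_left₀ hs.1 hs.2 k) (hw k)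

theorem tsum_mul_pow_pos (hw : ∀ k, 0 ≤ w k) (hw0 : 0 < w 0) (hs0 : 0 ≤ s)
    (hs : Summable fun k => w k * s ^ k) : 0 < ∑' k, w k * s ^ k :=
  hw0.trans_le (by simpa using hs.le_tsum 0 fun k _ => mul_nonneg (hw k) (pow_nonneg hs0 k))

end WeightSeries

section Coeff

variable {R : Type*} [CommSemiring R] {f g : R⟦X⟧}

theorem PowerSeries.coeff_pow_eq_zero_of_lt_s4 (hf : constantCoeff f = 0) {k n : ℕ} (h : n < k) :
    coeff n (f ^ k) = 0 :=
  X_pow_dvd_iff.mp (pow_dvd_pow_of_dvd (X_dvd_iff.mpr hf) k) n h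

theorem PowerSeries.coeff_pow_nonneg_s4 [PartialOrder R] [IsOrderedRing R]
    (hf : ∀ n, 0 ≤ coeff n f) (k n : ℕ) : 0 ≤ coeff n (f ^ k) := by
  induction k generalizing n with
  | zero => rw [pow_zero, coeff_one]; split_ifs <;> simp
  | succ k ih =>
    rw [pow_succ, coeff_mul]
    exact sum_nonneg fun p _ => mul_nonneg (ih p.1) (hf p.2)

theorem PowerSeries.coeff_mul_mul_pow (t : R) (n : ℕ) :
    coeff n (f * g) * t ^ n =
      ∑ p ∈ antidiagonal n, (coeff p.1 f * t ^ p.1) * (coeff p.2 g * t ^ p.2) := by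
  rw [coeff_mul, sum_mul]
  refine sum_congr rfl fun p hp => ?_
  rw [← mem_antidiagonal.mp hp, pow_add]
  ring

end Coeff

section Nonneg

variable {f g : ℝ⟦X⟧} {t : ℝ}

theorem PowerSeries.hasSum_coeff_mul_mul_pow_s4 (hf : ∀ n, 0 ≤ coeff n f) (hg : ∀ n, 0 ≤ coeff n g)
    (ht : 0 ≤ t) {a b : ℝ} (ha : HasSum (fun n => coeff n f * t ^ n) a)
    (hb : HasSum (fun n => coeff n g * t ^ n) b) :
    HasSum (fun n => coeff n (f * g) * t ^ n) (a * b) := by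
  have norm_eq {h : ℝ⟦X⟧} (hh : ∀ n, 0 ≤ coeff n h) :
      (fun n => ‖coeff n h * t ^ n‖) = fun n => coeff n h * t ^ n :=
    funext fun n => Real.norm_of_nonneg (by have := hh n; positivity)
  have hfa : Summable fun n => ‖coeff n f * t ^ n‖ := norm_eq hf ▸ ha.summable
  have hgb : Summable fun n => ‖coeff n g * t ^ n‖ := norm_eq hg ▸ hb.summable
  simp_rw [coeff_mul_mul_pow]
  rw [← ha.tsum_eq, ← hb.tsum_eq, tsum_mul_tsum_eq_tsum_sum_antidiagonal_of_summable_norm hfa hgb]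
  exact (summable_norm_sum_mul_antidiagonal_of_summable_norm hfa hgb).of_norm.hasSum

theorem PowerSeries.hasSum_coeff_pow_mul_pow_s4 (hf : ∀ n, 0 ≤ coeff n f) (ht : 0 ≤ t) {a : ℝ}
    (ha : HasSum (fun n => coeff n f * t ^ n) a) (k : ℕ) :
    HasSum (fun n => coeff n (f ^ k) * t ^ n) (a ^ k) := by
  induction k with
  | zero =>
    simp only [pow_zero, coeff_one]
    convert hasSum_ite_eq 0 (1 : ℝ) with n
    split_ifs with h <;> simp [h]
  | succ k ih =>
    rw [pow_succ, pow_succ]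
    exact hasSum_coeff_mul_mul_pow_s4 (coeff_pow_nonneg_s4 hf k) hf ht ih ha

theorem PowerSeries.sum_range_coeff_mul_mul_pow_le (hf : ∀ n, 0 ≤ coeff n f)
    (hg : ∀ n, 0 ≤ coeff n g) (ht : 0 ≤ t) (N : ℕ) :
    ∑ n ∈ range N, coeff n (f * g) * t ^ n ≤
      (∑ n ∈ range N, coeff n f * t ^ n) * ∑ n ∈ range N, coeff n g * t ^ n := by
  set s := {p ∈ range N ×ˢ range N | p.1 + p.2 < N}
  have hfiber : ∀ n ∈ range N, {p ∈ s | p.1 + p.2 = n} = antidiagonal n := by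
    intro n hn
    ext p
    simp only [s, mem_filter, mem_product, mem_range,
      HasAntidiagonal.mem_antidiagonal] at hn ⊢
    omega
  set F : ℕ × ℕ → ℝ := fun p => (coeff p.1 f * t ^ p.1) * (coeff p.2 g * t ^ p.2)
  calc ∑ n ∈ range N, coeff n (f * g) * t ^ n
      = ∑ n ∈ range N, ∑ p ∈ s with p.1 + p.2 = n, F p :=
        sum_congr rfl fun n hn => by rw [coeff_mul_mul_pow, hfiber n hn]
    _ = ∑ p ∈ s, F p := sum_fiberwise_of_maps_to (fun p hp => mem_range.mpr (mem_filter.mp hp).2) F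
    _ ≤ ∑ p ∈ range N ×ˢ range N, F p :=
        sum_le_sum_of_subset_of_nonneg (filter_subset _ _) fun p _ _ => by
          have := hf p.1; have := hg p.2; positivity
    _ = _ := by rw [sum_mul_sum, sum_product]

theorem PowerSeries.sum_range_coeff_pow_mul_pow_le_s4 (hf : ∀ n, 0 ≤ coeff n f) (ht : 0 ≤ t)
    (k N : ℕ) :
    ∑ n ∈ range N, coeff n (f ^ k) * t ^ n ≤ (∑ n ∈ range N, coeff n f * t ^ n) ^ k := by
  induction k with
  | zero =>
    rcases N with _ | N
    · simp
    · simp [sum_range_succ', coeff_one]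
  | succ k ih =>
    rw [pow_succ, pow_succ]
    refine (sum_range_coeff_mul_mul_pow_le (coeff_pow_nonneg_s4 hf k) hf ht N).trans ?_
    gcongr
    exact sum_nonneg fun n _ => by have := hf n; positivity

end Nonneg

section FunctionalEquation

variable {w : ℕ → ℝ} {Z : ℝ⟦X⟧}

theorem coeff_succ_eq_sum_range (hZ0 : constantCoeff Z = 0)
    (hZeq : ∀ n, coeff (n + 1) Z = ∑' k, w k * coeff n (Z ^ k)) {n K : ℕ} (h : n < K) :
    coeff (n + 1) Z = ∑ k ∈ range K, w k * coeff n (Z ^ k) := by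
  rw [hZeq n]
  refine tsum_eq_sum fun k hk => ?_
  rw [coeff_pow_eq_zero_of_lt_s4 hZ0 (by simp only [mem_range, not_lt] at hk; omega), mul_zero]

theorem sum_range_succ_coeff_mul_pow_le (hw : ∀ k, 0 ≤ w k) (hZ0 : constantCoeff Z = 0)
    (hZeq : ∀ n, coeff (n + 1) Z = ∑' k, w k * coeff n (Z ^ k)) (hZnn : ∀ n, 0 ≤ coeff n Z)
    {t s : ℝ} (ht : 0 ≤ t) (hs : Summable fun k => w k * s ^ k) {N : ℕ}
    (hN : ∑ n ∈ range N, coeff n Z * t ^ n ≤ s) :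
    ∑ n ∈ range (N + 1), coeff n Z * t ^ n ≤ t * ∑' k, w k * s ^ k := by
  have hS : 0 ≤ ∑ n ∈ range N, coeff n Z * t ^ n :=
    sum_nonneg fun n _ => by have := hZnn n; positivity
  calc ∑ n ∈ range (N + 1), coeff n Z * t ^ n
      = ∑ n ∈ range N, ∑ k ∈ range N, w k * coeff n (Z ^ k) * t ^ (n + 1) := by
        rw [sum_range_succ', coeff_zero_eq_constantCoeff_apply, hZ0, zero_mul, add_zero]
        refine sum_congr rfl fun n hn => ?_
        rw [coeff_succ_eq_sum_range hZ0 hZeq (mem_range.mp hn), sum_mul]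
    _ = t * ∑ k ∈ range N, w k * ∑ n ∈ range N, coeff n (Z ^ k) * t ^ n := by
        rw [sum_comm, mul_sum]
        refine sum_congr rfl fun k _ => ?_
        rw [mul_sum, mul_sum]
        exact sum_congr rfl fun n _ => by ring
    _ ≤ t * ∑ k ∈ range N, w k * s ^ k := by
        gcongr with k
        · exact hw k
        · exact (sum_range_coeff_pow_mul_pow_le_s4 hZnn ht k N).trans (pow_le_pow_left₀ hS hN k)
    _ ≤ t * ∑' k, w k * s ^ k := by
        gcongr
        exact hs.sum_le_tsum _ fun k _ => mul_nonneg (hw k) (pow_nonneg (hS.trans hN) k)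

theorem ofReal_div_tsum_le_radiusOfCoeff (hw : ∀ k, 0 ≤ w k) (hZ0 : constantCoeff Z = 0)
    (hZeq : ∀ n, coeff (n + 1) Z = ∑' k, w k * coeff n (Z ^ k)) (hZnn : ∀ n, 0 ≤ coeff n Z)
    {s : ℝ} (hs0 : 0 ≤ s) (hs : Summable fun k => w k * s ^ k) :
    ENNReal.ofReal (s / ∑' k, w k * s ^ k) ≤ radiusOfCoeff fun n => coeff n Z := by
  set t := s / ∑' k, w k * s ^ k
  have hΦ : 0 ≤ ∑' k, w k * s ^ k := tsum_nonneg fun k => mul_nonneg (hw k) (pow_nonneg hs0 k)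
  have ht : 0 ≤ t := div_nonneg hs0 hΦ
  have hts : t * ∑' k, w k * s ^ k ≤ s := by
    rcases hΦ.eq_or_lt with h | h
    · rw [← h, mul_zero]; exact hs0
    · rw [div_mul_cancel₀ s h.ne']
  have hbound : ∀ N, ∑ n ∈ range N, coeff n Z * t ^ n ≤ s := by
    intro N
    induction N with
    | zero => simpa using hs0
    | succ N ih => exact (sum_range_succ_coeff_mul_pow_le hw hZ0 hZeq hZnn ht hs ih).trans hts
  exact ofReal_le_radiusOfCoeff ht
    (summable_of_sum_range_le (fun n => by have := hZnn n; positivity) hbound)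

theorem le_toReal_radiusOfCoeff_mul_tsum (hw : ∀ k, 0 ≤ w k) (hw0 : 0 < w 0)
    (hZ0 : constantCoeff Z = 0) (hZeq : ∀ n, coeff (n + 1) Z = ∑' k, w k * coeff n (Z ^ k))
    (hZnn : ∀ n, 0 ≤ coeff n Z) (hρ : (radiusOfCoeff fun n => coeff n Z) ≠ ⊤) {s : ℝ}
    (hs0 : 0 ≤ s) (hs : Summable fun k => w k * s ^ k) :
    s ≤ (radiusOfCoeff fun n => coeff n Z).toReal * ∑' k, w k * s ^ k := by
  rw [← div_le_iff₀ (tsum_mul_pow_pos hw hw0 hs0 hs), ← ENNReal.ofReal_le_iff_le_toReal hρ]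
  exact ofReal_div_tsum_le_radiusOfCoeff hw hZ0 hZeq hZnn hs0 hs

theorem mul_tsum_le_of_hasSum (hw : ∀ k, 0 ≤ w k) (hZ0 : constantCoeff Z = 0)
    (hZeq : ∀ n, coeff (n + 1) Z = ∑' k, w k * coeff n (Z ^ k)) (hZnn : ∀ n, 0 ≤ coeff n Z)
    {r z : ℝ} (hr : 0 ≤ r) (hz : HasSum (fun n => coeff n Z * r ^ n) z) :
    r * ∑' k, w k * z ^ k ≤ z := by
  have hz0 : 0 ≤ z := hz.nonneg fun n => by have := hZnn n; positivity
  have hshift : HasSum (fun n => coeff (n + 1) Z * r ^ (n + 1)) z := by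
    rw [← hasSum_nat_add_iff' 1] at hz
    simpa [coeff_zero_eq_constantCoeff_apply, hZ0] using hz
  have hterm (k : ℕ) :
      HasSum (fun n => w k * coeff n (Z ^ k) * r ^ (n + 1)) (r * (w k * z ^ k)) := by
    simpa only [mul_assoc] using
      ((hasSum_coeff_pow_mul_pow_s4 hZnn hr hz k).mul_left (r * w k)).congr_fun fun n => by ring
  rw [← tsum_mul_left]
  refine Real.tsum_le_of_sum_range_le (fun k => by have := hw k; positivity) fun K => ?_
  refine hasSum_le (fun n => ?_) (hasSum_sum fun k _ => hterm k) hshift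
  rw [← sum_mul, coeff_succ_eq_sum_range hZ0 hZeq (by omega : n < max K (n + 1))]
  gcongr
  · exact fun k _ _ => mul_nonneg (hw k) (coeff_pow_nonneg_s4 hZnn k n)
  · exact le_max_left _ _

end FunctionalEquation

section Deriv

variable {a : ℕ → ℝ} {R : ℝ}

theorem abs_nat_mul_mul_pow_sub_one_le {M b y : ℝ} (hM : ∀ n, |a n| * R ^ n ≤ M) (hR : 0 < R)
    (hb : 0 < b) (hy : |y| ≤ b) (n : ℕ) :
    |n * a n * y ^ (n - 1)| ≤ M / b * (n * (b / R) ^ n) := by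
  rcases n with _ | m
  · simp
  calc |(m + 1 : ℕ) * a (m + 1) * y ^ (m + 1 - 1)| = (m + 1) * |a (m + 1)| * |y| ^ m := by
        rw [abs_mul, abs_mul, abs_pow, Nat.add_sub_cancel, Nat.abs_cast]
        push_cast
        ring
    _ ≤ (m + 1) * (|a (m + 1)| * R ^ (m + 1)) * b ^ m / R ^ (m + 1) := by
        rw [show (m + 1) * (|a (m + 1)| * R ^ (m + 1)) * b ^ m / R ^ (m + 1) =
          (m + 1) * |a (m + 1)| * b ^ m by field_simp]
        gcongr
    _ ≤ (m + 1) * M * b ^ m / R ^ (m + 1) := by grw [hM]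
    _ = M / b * ((m + 1 : ℕ) * (b / R) ^ (m + 1)) := by
        rw [div_pow]
        field_simp
        push_cast
        ring

theorem hasDerivAt_tsum_mul_pow (ha : Summable fun n => a n * R ^ n) {x : ℝ} (hx : |x| < R) :
    Summable (fun n : ℕ => n * a n * x ^ (n - 1)) ∧
      HasDerivAt (fun y => ∑' n, a n * y ^ n) (∑' n : ℕ, n * a n * x ^ (n - 1)) x := by
  have hR : 0 < R := (abs_nonneg x).trans_lt hx
  obtain ⟨M, hM⟩ : ∃ M, ∀ n, |a n| * R ^ n ≤ M := by
    obtain ⟨M, hM⟩ := ha.tendsto_atTop_zero.norm.bddAbove_range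
    refine ⟨M, fun n => ?_⟩
    simpa [abs_mul, abs_of_pos hR] using hM (Set.mem_range_self n)
  obtain ⟨b, hxb, hbR⟩ := exists_between hx
  have hb : 0 < b := (abs_nonneg x).trans_lt hxb
  replace hxb : x ∈ Set.Ioo (-b) b := abs_lt.mp hxb
  replace hbR : |b / R| < 1 := by rwa [abs_of_pos (by positivity), div_lt_one hR]
  have hu : Summable fun n : ℕ => M / b * (n * (b / R) ^ n) := by
    simpa using (summable_pow_mul_geometric_of_norm_lt_one 1 hbR).mul_left (M / b)
  have hbound (n : ℕ) (y : ℝ) (hy : y ∈ Set.Ioo (-b) b) :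
      ‖n * a n * y ^ (n - 1)‖ ≤ M / b * (n * (b / R) ^ n) :=
    abs_nat_mul_mul_pow_sub_one_le hM hR hb (abs_le.mpr ⟨hy.1.le, hy.2.le⟩) n
  refine ⟨.of_norm_bounded hu fun n => hbound n x hxb, ?_⟩
  refine hasDerivAt_tsum_of_isPreconnected hu isOpen_Ioo isPreconnected_Ioo
    (fun n y _ => ?_) hbound (y₀ := 0) ⟨by linarith, hb⟩ ?_ hxb
  · simpa [mul_comm, mul_assoc, mul_left_comm] using (hasDerivAt_pow n y).const_mul (a n)
  · exact summable_of_ne_finset_zero (s := {0}) fun n hn => by simp_all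

end Deriv

theorem HasDerivAt.mul_eq_of_eventually_le_mul {f : ℝ → ℝ} {f' c x : ℝ} (hf : HasDerivAt f f' x)
    (hle : ∀ᶠ y in 𝓝 x, y ≤ c * f y) (heq : x = c * f x) : x * f' = f x := by
  have hmax : IsLocalMax (fun y => y - c * f y) x :=
    hle.mono fun y hy => by simp only; linarith
  have hcrit : 1 - c * f' = 0 := hmax.hasDerivAt_eq_zero ((hasDerivAt_id x).sub (hf.const_mul c))
  calc x * f' = f x * (c * f') := by rw [mul_left_comm, ← mul_assoc, ← heq]
    _ = f x := by rw [show c * f' = 1 by linarith, mul_one]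

theorem hasSum_nat_mul_mul_pow_div {w : ℕ → ℝ} {τ D : ℝ}
    (hD : HasSum (fun k : ℕ => k * w k * τ ^ (k - 1)) D) (hτD : τ * D ≠ 0) :
    HasSum (fun k : ℕ => k * (w k * τ ^ k / (τ * D))) 1 := by
  have hterm (k : ℕ) : τ * (k * w k * τ ^ (k - 1)) / (τ * D) = k * (w k * τ ^ k / (τ * D)) := by
    rcases k with _ | k
    · simp
    · push_cast
      ring
  simpa only [hterm, div_self hτD] using (hD.mul_left τ).div_const (τ * D)

theorem tilted_weight_sequence_is_critical_general
    (w : ℕ → ℝ) (hw : ∀ k, 0 ≤ w k) (hw0 : 0 < w 0)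
    (Z : PowerSeries ℝ) (hZ0 : PowerSeries.constantCoeff Z = 0)
    (hZeq : ∀ n : ℕ, PowerSeries.coeff (n + 1) Z =
      ∑' k : ℕ, w k * PowerSeries.coeff n (Z ^ k))
    (hZnn : ∀ n : ℕ, 0 ≤ PowerSeries.coeff n Z)
    (τ : ℝ)
    (hτdef : τ = ∑' n : ℕ, PowerSeries.coeff n Z *
      (radiusOfCoeff fun m => PowerSeries.coeff m Z).toReal ^ n)
    (hτpos : 0 < τ) (hτρ : ENNReal.ofReal τ < radiusOfCoeff w) :
    (∀ k : ℕ, 0 ≤ w k * τ ^ k / ∑' j : ℕ, w j * τ ^ j) ∧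
    Summable (fun k : ℕ => w k * τ ^ k / ∑' j : ℕ, w j * τ ^ j) ∧
    (∑' k : ℕ, w k * τ ^ k / ∑' j : ℕ, w j * τ ^ j) = 1 ∧
    Summable (fun k : ℕ => (k : ℝ) * (w k * τ ^ k / ∑' j : ℕ, w j * τ ^ j)) ∧
    (∑' k : ℕ, (k : ℝ) * (w k * τ ^ k / ∑' j : ℕ, w j * τ ^ j)) = 1 ∧
    τ * (∑' k : ℕ, (k : ℝ) * w k * τ ^ (k - 1)) = (∑' j : ℕ, w j * τ ^ j) ∧
    ∃ ε : ℝ, 0 < ε ∧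
      Summable (fun k : ℕ => (w k * τ ^ k / ∑' j : ℕ, w j * τ ^ j) * (1 + ε) ^ k) := by
  set r := (radiusOfCoeff fun m => coeff m Z).toReal
  -- `toReal` sends `ρ_Z = ∞` to `0` as well, so this also gives `ρ_Z ≠ ∞`.
  have hr : r ≠ 0 := fun h => by
    rw [h, tsum_eq_single 0 fun n hn => by simp [hn]] at hτdef
    simp [hZ0, hτpos.ne'] at hτdef
  have hZτ : HasSum (fun n => coeff n Z * r ^ n) τ := by
    by_contra h
    rw [tsum_eq_zero_of_not_summable fun hs => h (hτdef ▸ hs.hasSum)] at hτdef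
    exact hτpos.ne' hτdef
  obtain ⟨R, hτR, hR⟩ := exists_summable_of_ofReal_lt_radiusOfCoeff hτρ
  have hτ : τ ∈ Set.Icc 0 R := ⟨hτpos.le, hτR.le⟩
  have hwτ := summable_mul_pow_of_mem_Icc hw hR hτ
  have hbelow (s : ℝ) (hs : s ∈ Set.Icc 0 R) : s ≤ r * ∑' k, w k * s ^ k :=
    le_toReal_radiusOfCoeff_mul_tsum hw hw0 hZ0 hZeq hZnn (ENNReal.toReal_ne_zero.mp hr).2 hs.1
      (summable_mul_pow_of_mem_Icc hw hR hs)
  have hfix : τ = r * ∑' k, w k * τ ^ k :=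
    (hbelow τ hτ).antisymm (mul_tsum_le_of_hasSum hw hZ0 hZeq hZnn ENNReal.toReal_nonneg hZτ)
  obtain ⟨hD, hderiv⟩ := hasDerivAt_tsum_mul_pow hR (by rwa [abs_of_pos hτpos])
  have hcrit := hderiv.mul_eq_of_eventually_le_mul
    (eventually_of_mem (Icc_mem_nhds hτpos hτR) hbelow) hfix
  have hΦ := tsum_mul_pow_pos hw hw0 hτ.1 hwτ
  have hπ : HasSum (fun k => w k * τ ^ k / ∑' j, w j * τ ^ j) 1 := by
    simpa only [div_self hΦ.ne'] using hwτ.hasSum.div_const (∑' j, w j * τ ^ j)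
  have hmean := hasSum_nat_mul_mul_pow_div hD.hasSum (hcrit ▸ hΦ.ne')
  rw [hcrit] at hmean
  have hmoment : Summable fun k => (w k * τ ^ k / ∑' j, w j * τ ^ j) * (1 + (R / τ - 1)) ^ k :=
    (hR.div_const (∑' j, w j * τ ^ j)).congr fun k => by
      rw [add_sub_cancel, div_pow]
      field_simp
  exact ⟨fun k => div_nonneg (mul_nonneg (hw k) (pow_nonneg hτ.1 k)) hΦ.le,
    hπ.summable, hπ.tsum_eq, hmean.summable, hmean.tsum_eq, hcrit,
    R / τ - 1, by linarith [(one_lt_div hτpos).mpr hτR], hmoment⟩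

/-- **Tilted weight sequence is a critical offspring distribution with exponential
moments.**  In the setting of simply generated trees with weight sequence `w`
(`w 0 > 0`, `w k > 0` for some `k ≥ 2`, `Φ(x) = ∑ w k x^k` of positive radius of
convergence `ρ`, and `Z` the nonnegative formal power series solution of `Z = xΦ(Z)`
with radius `ρ_Z` and `τ := ∑ Z_n ρ_Z^n`), suppose additionally `0 < τ < ρ`.  Then
`π k := w k τ^k / Φ(τ)` is a probability distribution on ℕ, it has mean one, i.e.
`∑ k π k = 1` (equivalently `τ Φ′(τ) = Φ(τ)`), and there is `ε > 0` with
`∑ π k (1+ε)^k < ∞`. -/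
theorem tilted_weight_sequence_is_critical
    (w : ℕ → ℝ) (hw : ∀ k, 0 ≤ w k) (hw0 : 0 < w 0) (hw2 : ∃ k, 2 ≤ k ∧ 0 < w k)
    (hρ : 0 < radiusOfCoeff w)
    (Z : PowerSeries ℝ) (hZ0 : PowerSeries.constantCoeff Z = 0)
    (hZeq : ∀ n : ℕ, PowerSeries.coeff (n + 1) Z =
      ∑' k : ℕ, w k * PowerSeries.coeff n (Z ^ k))
    (hZnn : ∀ n : ℕ, 0 ≤ PowerSeries.coeff n Z)
    (τ : ℝ)
    (hτdef : τ = ∑' n : ℕ, PowerSeries.coeff n Z *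
      (radiusOfCoeff fun m => PowerSeries.coeff m Z).toReal ^ n)
    (hτpos : 0 < τ) (hτρ : ENNReal.ofReal τ < radiusOfCoeff w) :
    (∀ k : ℕ, 0 ≤ w k * τ ^ k / ∑' j : ℕ, w j * τ ^ j) ∧
    Summable (fun k : ℕ => w k * τ ^ k / ∑' j : ℕ, w j * τ ^ j) ∧
    (∑' k : ℕ, w k * τ ^ k / ∑' j : ℕ, w j * τ ^ j) = 1 ∧
    Summable (fun k : ℕ => (k : ℝ) * (w k * τ ^ k / ∑' j : ℕ, w j * τ ^ j)) ∧
    (∑' k : ℕ, (k : ℝ) * (w k * τ ^ k / ∑' j : ℕ, w j * τ ^ j)) = 1 ∧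
    τ * (∑' k : ℕ, (k : ℝ) * w k * τ ^ (k - 1)) = (∑' j : ℕ, w j * τ ^ j) ∧
    ∃ ε : ℝ, 0 < ε ∧
      Summable (fun k : ℕ => (w k * τ ^ k / ∑' j : ℕ, w j * τ ^ j) * (1 + ε) ^ k) :=
  tilted_weight_sequence_is_critical_general w hw hw0 Z hZ0 hZeq hZnn τ hτdef hτpos hτρ
end

section
/- (Criticality of the induced offspring distribution for trees conditioned on degrees in Ω.) Let ζ be a random nonnegative integer with E[ζ] = 1, P(ζ = 0) > 0, and let Ω ⊊ ℕ₀ satisfy 0 ∈ Ω and P(ζ ∈ Ω) > 0; write Ω^c := ℕ₀ \ Ω. Set f(z) := Σ_{k ∈ Ω} P(ζ = k) z^k and h(z) := Σ_{k ∈ Ω^c} P(ζ = k) z^{k−1}. Then h(1) = 1 − P(ζ ∈ Ω) < 1, the power series G(z) := f(z) / (1 − h(z)) has nonnegative coefficients, G(1) = 1 (so its coefficients form a probability distribution on ℕ₀), and G′(1) = 1 (the distribution has mean one). -/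
/-!
Since `0 ∈ Ω`, the law of `ζ` has generating function `P = f + X h`, so `h(1) = 1 - f(1)`.
The series `G = f / (1 - h)` solves the renewal equation `G = f + G h`; as `h₀ < 1` its
coefficients are nonnegative by induction, its partial sums are bounded by `f(1) / (1 - h(1))`,
and the Cauchy product then gives `G(1) = f(1) + G(1) h(1)`, i.e. `G(1) = 1`.
The Euler derivation `θ = X d/dX` turns this into the renewal equation
`θG = (θf + G θh) + θG h`, and `1 = P′(1) = f′(1) + h(1) + h′(1)` yields `G′(1) = 1`.
-/

open PowerSeries Finset

namespace PowerSeries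

section Euler

variable (R : Type*) [CommSemiring R]

/-- The Euler operator `θ = X d/dX`: `θ A` evaluated at `1` is `A′(1)`. -/
noncomputable def eulerDerivation : Derivation R R⟦X⟧ R⟦X⟧ := (X : R⟦X⟧) • d⁄dX R

variable {R}

theorem coeff_eulerDerivation (A : R⟦X⟧) (n : ℕ) :
    coeff n (eulerDerivation R A) = n * coeff n A := by
  cases n with
  | zero => simp [eulerDerivation]
  | succ n => simp [eulerDerivation, coeff_succ_X_mul, coeff_derivative, mul_comm]

theorem eulerDerivation_X : eulerDerivation R X = X := by
  simp [eulerDerivation]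

theorem eulerDerivation_X_mul (A : R⟦X⟧) :
    eulerDerivation R (X * A) = X * A + X * eulerDerivation R A := by
  rw [Derivation.leibniz, eulerDerivation_X, smul_eq_mul, smul_eq_mul]
  ring

theorem eulerDerivation_eq_add_mul {S T H : R⟦X⟧} (h : S = T + S * H) :
    eulerDerivation R S =
      (eulerDerivation R T + S * eulerDerivation R H) + eulerDerivation R S * H := by
  nth_rewrite 1 [h]
  rw [map_add, Derivation.leibniz, smul_eq_mul, smul_eq_mul]
  ring

end Euler

theorem hasSum_coeff_X_mul_iff {R : Type*} [Ring R] [TopologicalSpace R] [IsTopologicalAddGroup R]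
    {A : R⟦X⟧} {a : R} :
    HasSum (fun n => coeff n (X * A)) a ↔ HasSum (fun n => coeff n A) a := by
  rw [← hasSum_nat_add_iff' 1]
  simp [coeff_succ_X_mul]

theorem mul_one_sub_inv_eq_add_mul {k : Type*} [Field k] {F H : k⟦X⟧} (hH : coeff 0 H ≠ 1) :
    F * (1 - H)⁻¹ = F + F * (1 - H)⁻¹ * H := by
  have hunit : constantCoeff (1 - H) ≠ 0 := by
    rw [map_sub, map_one, sub_ne_zero, ← coeff_zero_eq_constantCoeff_apply]; exact hH.symm
  calc F * (1 - H)⁻¹ = F * ((1 - H)⁻¹ * (1 - H)) + F * (1 - H)⁻¹ * H := by ring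
    _ = F + F * (1 - H)⁻¹ * H := by rw [PowerSeries.inv_mul_cancel _ hunit, mul_one]

section Nonneg

variable {A B F S T H : ℝ⟦X⟧}

theorem coeff_X_mul_nonneg (hA : ∀ n, 0 ≤ coeff n A) (n : ℕ) : 0 ≤ coeff n (X * A) := by
  cases n with
  | zero => simp
  | succ n => simpa [coeff_succ_X_mul] using hA n

theorem coeff_mul_nonneg (hA : ∀ n, 0 ≤ coeff n A) (hB : ∀ n, 0 ≤ coeff n B) (n : ℕ) :
    0 ≤ coeff n (A * B) := by
  rw [coeff_mul]
  exact sum_nonneg fun kl _ => mul_nonneg (hA kl.1) (hB kl.2)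

theorem coeff_eulerDerivation_nonneg (hA : ∀ n, 0 ≤ coeff n A) (n : ℕ) :
    0 ≤ coeff n (eulerDerivation ℝ A) := by
  rw [coeff_eulerDerivation]
  exact mul_nonneg n.cast_nonneg (hA n)

theorem exists_hasSum_coeff_of_hasSum_coeff_add (hA : ∀ n, 0 ≤ coeff n A)
    (hB : ∀ n, 0 ≤ coeff n B) {s : ℝ} (h : HasSum (fun n => coeff n (A + B)) s) :
    ∃ a b, HasSum (fun n => coeff n A) a ∧ HasSum (fun n => coeff n B) b ∧ a + b = s := by
  have hle : ∀ n, coeff n A ≤ coeff n (A + B) := fun n => by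
    rw [map_add]; exact le_add_of_nonneg_right (hB n)
  obtain ⟨a, ha⟩ := h.summable.of_nonneg_of_le hA hle
  have hb : HasSum (fun n => coeff n B) (s - a) := by
    simpa only [map_add, add_sub_cancel_left] using h.sub ha
  exact ⟨a, s - a, ha, hb, add_sub_cancel a s⟩

theorem hasSum_coeff_mul (hA : ∀ n, 0 ≤ coeff n A) (hB : ∀ n, 0 ≤ coeff n B) {a b : ℝ}
    (ha : HasSum (fun n => coeff n A) a) (hb : HasSum (fun n => coeff n B) b) :
    HasSum (fun n => coeff n (A * B)) (a * b) := by
  have hprod : Summable fun x : ℕ × ℕ => coeff x.1 A * coeff x.2 B :=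
    ha.summable.mul_of_nonneg hb.summable (fun n => hA n) (fun n => hB n)
  have hcoeff : (fun n => coeff n (A * B)) =
      fun n => ∑ kl ∈ antidiagonal n, coeff kl.1 A * coeff kl.2 B :=
    funext fun n => coeff_mul n A B
  rw [hcoeff, ← ha.tsum_eq, ← hb.tsum_eq,
    ha.summable.tsum_mul_tsum_eq_tsum_sum_antidiagonal hb.summable hprod]
  exact (summable_sum_mul_antidiagonal_of_summable_mul
    (f := fun n => coeff n A) (g := fun n => coeff n B) hprod).hasSum

theorem sum_range_coeff_mul_le (hA : ∀ n, 0 ≤ coeff n A) (hB : ∀ n, 0 ≤ coeff n B) (N : ℕ) :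
    ∑ n ∈ range N, coeff n (A * B) ≤
      (∑ n ∈ range N, coeff n A) * ∑ n ∈ range N, coeff n B := by
  simp_rw [coeff_mul, Nat.sum_antidiagonal_eq_sum_range_succ (fun i j => coeff i A * coeff j B)]
  rw [sum_range_diag_flip N (fun i j => coeff i A * coeff j B), sum_mul]
  simp_rw [mul_sum]
  exact sum_le_sum fun i _ => sum_le_sum_of_subset_of_nonneg (range_mono (Nat.sub_le N i))
    fun j _ _ => mul_nonneg (hA i) (hB j)

theorem coeff_nonneg_of_eq_add_mul (hT : ∀ n, 0 ≤ coeff n T) (hH : ∀ n, 0 ≤ coeff n H)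
    (hH0 : coeff 0 H < 1) (h : S = T + S * H) (n : ℕ) : 0 ≤ coeff n S := by
  induction n using Nat.strong_induction_on with
  | _ n ih =>
    have hrec : coeff n S * (1 - coeff 0 H) =
        coeff n T + ∑ i ∈ range n, coeff i S * coeff (n - i) H := by
      have hn := congrArg (coeff n) h
      rw [map_add, coeff_mul,
        Nat.sum_antidiagonal_eq_sum_range_succ (fun i j => coeff i S * coeff j H),
        sum_range_succ, Nat.sub_self] at hn
      linear_combination hn
    have hpos : 0 ≤ coeff n S * (1 - coeff 0 H) := hrec ▸ add_nonneg (hT n)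
      (sum_nonneg fun i hi => mul_nonneg (ih i (mem_range.1 hi)) (hH _))
    exact nonneg_of_mul_nonneg_left hpos (sub_pos.2 hH0)

theorem hasSum_coeff_of_eq_add_mul (hT : ∀ n, 0 ≤ coeff n T) {t : ℝ}
    (ht : HasSum (fun n => coeff n T) t) (hH : ∀ n, 0 ≤ coeff n H) {η : ℝ}
    (hη : HasSum (fun n => coeff n H) η) (hη1 : η < 1) (h : S = T + S * H) :
    HasSum (fun n => coeff n S) (t / (1 - η)) := by
  have hS := coeff_nonneg_of_eq_add_mul hT hH ((le_hasSum hη 0 fun j _ => hH j).trans_lt hη1) h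
  have hbound : ∀ N, ∑ n ∈ range N, coeff n S ≤ t / (1 - η) := by
    intro N
    have hsplit : ∑ n ∈ range N, coeff n S =
        ∑ n ∈ range N, coeff n T + ∑ n ∈ range N, coeff n (S * H) := by
      rw [← sum_add_distrib]
      exact sum_congr rfl fun n _ => by rw [← map_add, ← h]
    have hmul := sum_range_coeff_mul_le hS hH N
    have hT' : ∑ n ∈ range N, coeff n T ≤ t := sum_le_hasSum _ (fun n _ => hT n) ht
    have hH' : ∑ n ∈ range N, coeff n H ≤ η := sum_le_hasSum _ (fun n _ => hH n) hη
    rw [le_div_iff₀ (sub_pos.2 hη1)]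
    nlinarith [sum_nonneg fun n (_ : n ∈ range N) => hS n]
  obtain ⟨s, hs⟩ := summable_of_sum_range_le hS hbound
  have hfixed : s = t + s * η := by
    refine hs.unique (ht.add (hasSum_coeff_mul hS hH hs hη) |>.congr_fun fun n => ?_)
    nth_rewrite 1 [h]
    exact map_add _ _ _
  convert hs using 1
  rw [div_eq_iff (sub_pos.2 hη1).ne']
  linarith

theorem exists_hasSum_coeff_eulerDerivation_of_add_X_mul (hF : ∀ n, 0 ≤ coeff n F)
    (hH : ∀ n, 0 ≤ coeff n H) {b m : ℝ} (hb : HasSum (fun n => coeff n H) b)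
    (h : HasSum (fun n => coeff n (eulerDerivation ℝ (F + X * H))) m) :
    ∃ A B, HasSum (fun n => coeff n (eulerDerivation ℝ F)) A ∧
      HasSum (fun n => coeff n (eulerDerivation ℝ H)) B ∧ A + b + B = m := by
  have hθH := coeff_eulerDerivation_nonneg hH
  rw [map_add, eulerDerivation_X_mul] at h
  obtain ⟨A, c, hA, hc, hAc⟩ := exists_hasSum_coeff_of_hasSum_coeff_add
    (coeff_eulerDerivation_nonneg hF)
    (fun n => by
      rw [map_add]
      exact add_nonneg (coeff_X_mul_nonneg hH n) (coeff_X_mul_nonneg hθH n))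
    h
  obtain ⟨b', B, hb', hB, hbB⟩ := exists_hasSum_coeff_of_hasSum_coeff_add
    (coeff_X_mul_nonneg hH) (coeff_X_mul_nonneg hθH) hc
  rw [hasSum_coeff_X_mul_iff] at hb' hB
  obtain rfl : b = b' := hb.unique hb'
  exact ⟨A, B, hA, hB, by linarith⟩

theorem coeff_mul_one_sub_inv_nonneg (hT : ∀ n, 0 ≤ coeff n T) (hH : ∀ n, 0 ≤ coeff n H)
    (hH0 : coeff 0 H < 1) (n : ℕ) : 0 ≤ coeff n (T * (1 - H)⁻¹) :=
  coeff_nonneg_of_eq_add_mul hT hH hH0 (mul_one_sub_inv_eq_add_mul hH0.ne) n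

theorem hasSum_coeff_mul_one_sub_inv (hT : ∀ n, 0 ≤ coeff n T) {t : ℝ}
    (ht : HasSum (fun n => coeff n T) t) (hH : ∀ n, 0 ≤ coeff n H) {η : ℝ}
    (hη : HasSum (fun n => coeff n H) η) (hη1 : η < 1) :
    HasSum (fun n => coeff n (T * (1 - H)⁻¹)) (t / (1 - η)) :=
  hasSum_coeff_of_eq_add_mul hT ht hH hη hη1
    (mul_one_sub_inv_eq_add_mul ((le_hasSum hη 0 fun j _ => hH j).trans_lt hη1).ne)

theorem hasSum_coeff_eulerDerivation_mul_one_sub_inv (hT : ∀ n, 0 ≤ coeff n T) {t τ : ℝ}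
    (ht : HasSum (fun n => coeff n T) t) (hτ : HasSum (fun n => coeff n (eulerDerivation ℝ T)) τ)
    (hH : ∀ n, 0 ≤ coeff n H) {η κ : ℝ} (hη : HasSum (fun n => coeff n H) η)
    (hκ : HasSum (fun n => coeff n (eulerDerivation ℝ H)) κ) (hη1 : η < 1) :
    HasSum (fun n => coeff n (eulerDerivation ℝ (T * (1 - H)⁻¹)))
      ((τ + t / (1 - η) * κ) / (1 - η)) := by
  have hH0 : coeff 0 H < 1 := (le_hasSum hη 0 fun j _ => hH j).trans_lt hη1
  have hS0 := coeff_mul_one_sub_inv_nonneg hT hH hH0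
  have hθH := coeff_eulerDerivation_nonneg hH
  refine hasSum_coeff_of_eq_add_mul (fun n => ?_) ?_ hH hη hη1
    (eulerDerivation_eq_add_mul (mul_one_sub_inv_eq_add_mul hH0.ne))
  · rw [map_add]
    exact add_nonneg (coeff_eulerDerivation_nonneg hT n) (coeff_mul_nonneg hS0 hθH n)
  · simpa only [map_add] using
      hτ.add (hasSum_coeff_mul hS0 hθH (hasSum_coeff_mul_one_sub_inv hT ht hH hη hη1) hκ)

end Nonneg

end PowerSeries

open PowerSeries

theorem induced_offspring_distribution_critical_general
    (p : ℕ → ℝ) (hp : ∀ k, 0 ≤ p k) (hsum : Summable p) (htotal : (∑' k : ℕ, p k) = 1)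
    (hmean_sum : Summable fun k : ℕ => (k : ℝ) * p k)
    (hmean : (∑' k : ℕ, (k : ℝ) * p k) = 1)
    (Ω : Set ℕ) [DecidablePred (· ∈ Ω)] (h0Ω : 0 ∈ Ω)
    (hPΩ : 0 < ∑' k : ℕ, if k ∈ Ω then p k else 0)
    (F H G : PowerSeries ℝ)
    (hF : F = PowerSeries.mk fun k => if k ∈ Ω then p k else 0)
    (hH : H = PowerSeries.mk fun j => if j + 1 ∈ Ω then (0 : ℝ) else p (j + 1))
    (hG : G = F * (1 - H)⁻¹) :
    (∑' j : ℕ, if j + 1 ∈ Ω then (0 : ℝ) else p (j + 1)) =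
        1 - (∑' k : ℕ, if k ∈ Ω then p k else 0) ∧
    (∑' j : ℕ, if j + 1 ∈ Ω then (0 : ℝ) else p (j + 1)) < 1 ∧
    (∀ k : ℕ, 0 ≤ PowerSeries.coeff k G) ∧
    Summable (fun k : ℕ => PowerSeries.coeff k G) ∧
    (∑' k : ℕ, PowerSeries.coeff k G) = 1 ∧
    Summable (fun k : ℕ => (k : ℝ) * PowerSeries.coeff k G) ∧
    (∑' k : ℕ, (k : ℝ) * PowerSeries.coeff k G) = 1 := by
  have hF0 : ∀ n, 0 ≤ coeff n F := fun n => by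
    rw [hF, coeff_mk]; split_ifs <;> simp [hp]
  have hH0 : ∀ n, 0 ≤ coeff n H := fun n => by
    rw [hH, coeff_mk]; split_ifs <;> simp [hp]
  have hP : ∀ n, coeff n (F + X * H) = p n := by
    rintro (_ | n)
    · simp [hF, h0Ω]
    · by_cases hn : n + 1 ∈ Ω <;> simp [hF, hH, coeff_succ_X_mul, hn]
  obtain ⟨a, b, hFa, hHb, hab⟩ := exists_hasSum_coeff_of_hasSum_coeff_add hF0
    (coeff_X_mul_nonneg hH0) ((htotal ▸ hsum.hasSum).congr_fun hP)
  rw [hasSum_coeff_X_mul_iff] at hHb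
  obtain ⟨A, B, hFA, hHB, hAB⟩ := exists_hasSum_coeff_eulerDerivation_of_add_X_mul hF0 hH0 hHb
    ((hmean ▸ hmean_sum.hasSum).congr_fun fun n => by rw [coeff_eulerDerivation, hP])
  have hFp : HasSum (fun k => if k ∈ Ω then p k else 0) a := by simpa [hF] using hFa
  have hHp : HasSum (fun j => if j + 1 ∈ Ω then (0 : ℝ) else p (j + 1)) b := by
    simpa [hH] using hHb
  have ha : 0 < a := hFp.tsum_eq ▸ hPΩ
  have hb : b < 1 := by linarith
  have hmass : a / (1 - b) = 1 := by rw [div_eq_one_iff_eq] <;> linarith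
  have hG1 : HasSum (fun n => coeff n G) 1 :=
    hG ▸ hmass ▸ hasSum_coeff_mul_one_sub_inv hF0 hFa hH0 hHb hb
  have hθG : HasSum (fun n : ℕ => (n : ℝ) * coeff n G) 1 := by
    have := hasSum_coeff_eulerDerivation_mul_one_sub_inv hF0 hFa hFA hH0 hHb hHB hb
    rw [hmass, one_mul, div_eq_one_iff_eq (by linarith) |>.2 (by linarith), ← hG] at this
    simpa only [coeff_eulerDerivation] using this
  refine ⟨hHp.tsum_eq.trans (by linarith [hFp.tsum_eq]), hHp.tsum_eq ▸ hb, ?_, hG1.summable,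
    hG1.tsum_eq, hθG.summable, hθG.tsum_eq⟩
  exact hG ▸ coeff_mul_one_sub_inv_nonneg hF0 hH0 ((le_hasSum hHb 0 fun j _ => hH0 j).trans_lt hb)

/-- **Criticality of the induced offspring distribution for trees conditioned on
degrees in `Ω`.**  Let `ζ` have law `(p k)` on ℕ with mean one and `p 0 > 0`, and let
`Ω ⊊ ℕ` with `0 ∈ Ω` and `P(ζ ∈ Ω) > 0`.  With `f(z) = ∑_{k∈Ω} p k z^k`,
`h(z) = ∑_{k∈Ωᶜ} p k z^{k−1}` and `G = f/(1 − h)` (as a formal power series), one has: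
`h(1) = 1 − P(ζ ∈ Ω) < 1`, the coefficients `q k` of `G` are nonnegative, `G(1) = 1`
(so `(q k)` is a probability distribution on ℕ), and `G′(1) = 1` (mean one). -/
theorem induced_offspring_distribution_critical
    (p : ℕ → ℝ) (hp : ∀ k, 0 ≤ p k) (hsum : Summable p) (htotal : (∑' k : ℕ, p k) = 1)
    (hp0 : 0 < p 0)
    (hmean_sum : Summable fun k : ℕ => (k : ℝ) * p k)
    (hmean : (∑' k : ℕ, (k : ℝ) * p k) = 1)
    (Ω : Set ℕ) [DecidablePred (· ∈ Ω)] (hΩne : Ω ≠ Set.univ) (h0Ω : 0 ∈ Ω)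
    (hPΩ : 0 < ∑' k : ℕ, if k ∈ Ω then p k else 0)
    (F H G : PowerSeries ℝ)
    (hF : F = PowerSeries.mk fun k => if k ∈ Ω then p k else 0)
    (hH : H = PowerSeries.mk fun j => if j + 1 ∈ Ω then (0 : ℝ) else p (j + 1))
    (hG : G = F * (1 - H)⁻¹) :
    (∑' j : ℕ, if j + 1 ∈ Ω then (0 : ℝ) else p (j + 1)) =
        1 - (∑' k : ℕ, if k ∈ Ω then p k else 0) ∧
    (∑' j : ℕ, if j + 1 ∈ Ω then (0 : ℝ) else p (j + 1)) < 1 ∧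
    (∀ k : ℕ, 0 ≤ PowerSeries.coeff k G) ∧
    Summable (fun k : ℕ => PowerSeries.coeff k G) ∧
    (∑' k : ℕ, PowerSeries.coeff k G) = 1 ∧
    Summable (fun k : ℕ => (k : ℝ) * PowerSeries.coeff k G) ∧
    (∑' k : ℕ, (k : ℝ) * PowerSeries.coeff k G) = 1 :=
  induced_offspring_distribution_critical_general p hp hsum htotal hmean_sum hmean Ω h0Ω hPΩ F H G
    hF hH hG
end

section
/- (Exponential moments of the induced offspring distribution.) Let ζ be a random nonnegative integer with E[ζ] = 1, P(ζ = 0) > 0, and let Ω ⊊ ℕ₀ satisfy 0 ∈ Ω and P(ζ ∈ Ω) > 0; write Ω^c := ℕ₀ \ Ω. Set f(z) := Σ_{k ∈ Ω} P(ζ = k) z^k and h(z) := Σ_{k ∈ Ω^c} P(ζ = k) z^{k−1}, and let (q_k)_{k≥0} be the coefficient sequence of G(z) := f(z)/(1 − h(z)). If E[(1 + δ)^ζ] < ∞ for some δ > 0, then the radius of convergence of G is strictly greater than 1; in particular there exists ε > 0 with Σ_{k≥0} q_k (1 + ε)^k < ∞. -/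
/-!
The coefficients `h j` of `H` are nonnegative and `∑ h j = P(ζ ∉ Ω, ζ ≥ 1) ≤ 1 - P(ζ ∈ Ω) < 1`.
The exponential moment makes `r ↦ ∑ h j rʲ` finite and continuous up to `1 + δ`, so it stays
below `1` at some `r > 1`. Rescaling by `r` reduces everything to absolute summability of
coefficients: for `v = (1 - H)⁻¹ = 1 + H v` the partial sums `S` of `‖coeff n v‖` satisfy
`S ≤ 1 + (∑ ‖coeff n H‖) S`, hence are bounded, and Cauchy products of absolutely summable
sequences are absolutely summable.
-/

open scoped ENNReal

open PowerSeries Finset Filter Topology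

lemma one_lt_radiusOfCoeff_of_summable {a : ℕ → ℝ} {r : ℝ} (hr : 1 < r)
    (h : Summable fun n => a n * r ^ n) : 1 < radiusOfCoeff a := by
  let s : NNReal := ⟨r, by linarith⟩
  have hs : (s : ℝ≥0∞) ≤ radiusOfCoeff a :=
    le_iSup₂ (f := fun (t : NNReal) (_ : Summable fun n => a n * (t : ℝ) ^ n) => (t : ℝ≥0∞)) s h
  exact (ENNReal.one_lt_coe_iff.2 (show (1 : NNReal) < s from hr)).trans_le hs

lemma sum_range_sum_antidiagonal_le_mul {a b : ℕ → ℝ} (ha : ∀ i, 0 ≤ a i) (hb : ∀ j, 0 ≤ b j)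
    (N : ℕ) :
    ∑ n ∈ range N, ∑ kl ∈ antidiagonal n, a kl.1 * b kl.2 ≤
      (∑ i ∈ range N, a i) * ∑ j ∈ range N, b j := by
  simp only [Nat.sum_antidiagonal_eq_sum_range_succ_mk, Nat.succ_eq_add_one]
  rw [sum_range_diag_flip N fun i j => a i * b j, sum_mul]
  refine sum_le_sum fun i _ => ?_
  rw [← mul_sum]
  exact mul_le_mul_of_nonneg_left
    (sum_le_sum_of_subset_of_nonneg (range_subset_range.2 (Nat.sub_le _ _)) fun j _ _ => hb j)
    (ha i)

lemma exists_gt_tsum_mul_pow_lt {a : ℕ → ℝ} {R ρ c : ℝ} (hR : Summable fun n => ‖a n‖ * R ^ n)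
    (hρ : 0 ≤ ρ) (hρR : ρ < R) (hc : ∑' n, a n * ρ ^ n < c) :
    ∃ r, ρ < r ∧ r < R ∧ ∑' n, a n * r ^ n < c := by
  have hcont : ContinuousOn (fun x : ℝ => ∑' n, a n * x ^ n) (Set.Icc (-R) R) :=
    continuousOn_tsum (fun n => by fun_prop) hR fun n x hx => by
      rw [norm_mul, norm_pow]
      gcongr
      exact abs_le.2 hx
  have hlt : ∀ᶠ x in 𝓝 ρ, ∑' n, a n * x ^ n < c :=
    (hcont.continuousAt (Icc_mem_nhds (by linarith) hρR)).eventually_lt continuousAt_const hc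
  obtain ⟨r, hr, hrρ, hrR⟩ :=
    ((hlt.filter_mono nhdsWithin_le_nhds).and (Ioo_mem_nhdsGT hρR)).exists
  exact ⟨r, hrρ, hrR, hr⟩

lemma tsum_ite_succ_notMem_lt_tsum {p : ℕ → ℝ} (hp : ∀ k, 0 ≤ p k) (hsum : Summable p)
    (Ω : Set ℕ) [DecidablePred (· ∈ Ω)] (hPΩ : 0 < ∑' k, if k ∈ Ω then p k else 0) :
    ∑' j, (if j + 1 ∈ Ω then 0 else p (j + 1)) < ∑' k, p k := by
  set g : ℕ → ℝ := fun k => if k ∈ Ω then 0 else p k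
  have hg : Summable g :=
    hsum.of_nonneg_of_le (fun k => ite_nonneg le_rfl (hp k)) fun k => by
      dsimp [g]; split_ifs <;> simp [hp]
  have hΩ : Summable fun k => if k ∈ Ω then p k else 0 :=
    hsum.of_nonneg_of_le (fun k => ite_nonneg (hp k) le_rfl) fun k => by split_ifs <;> simp [hp]
  have hsplit : ∑' k, p k = ∑' k, g k + ∑' k, if k ∈ Ω then p k else 0 := by
    rw [← hg.tsum_add hΩ]
    exact tsum_congr fun k => by dsimp [g]; split_ifs <;> simp
  have hshift : ∑' j, g (j + 1) ≤ ∑' k, g k := by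
    rw [hg.tsum_eq_zero_add]
    exact le_add_of_nonneg_left (ite_nonneg le_rfl (hp 0))
  linarith

namespace PowerSeries

lemma rescale_inv {k : Type*} [Field k] (a : k) (φ : k⟦X⟧) : rescale a φ⁻¹ = (rescale a φ)⁻¹ := by
  have hconst : constantCoeff (rescale a φ) = constantCoeff φ := by
    rw [← coeff_zero_eq_constantCoeff_apply, ← coeff_zero_eq_constantCoeff_apply, coeff_rescale,
      pow_zero, one_mul]
  by_cases hφ : constantCoeff φ = 0
  · rw [inv_eq_zero.2 hφ, inv_eq_zero.2 (hconst ▸ hφ), map_zero]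
  · rw [eq_inv_iff_mul_eq_one (hconst ▸ hφ), ← map_mul, PowerSeries.inv_mul_cancel _ hφ, map_one]

lemma summable_norm_coeff_mul {R : Type*} [NormedRing R] {f g : R⟦X⟧}
    (hf : Summable fun n => ‖coeff n f‖) (hg : Summable fun n => ‖coeff n g‖) :
    Summable fun n => ‖coeff n (f * g)‖ := by
  simpa only [coeff_mul] using summable_norm_sum_mul_antidiagonal_of_summable_norm hf hg

lemma summable_norm_coeff_inv_one_sub {𝕜 : Type*} [NormedField 𝕜] {H : 𝕜⟦X⟧}
    (hH : Summable fun n => ‖coeff n H‖) (hlt : ∑' n, ‖coeff n H‖ < 1) :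
    Summable fun n => ‖coeff n (1 - H)⁻¹‖ := by
  set A := ∑' n, ‖coeff n H‖
  set v := (1 - H)⁻¹
  have hconst : constantCoeff (1 - H) ≠ 0 := by
    have h0 : ‖coeff 0 H‖ ≤ A := hH.le_tsum 0 fun _ _ => norm_nonneg _
    intro h
    rw [map_sub, map_one, sub_eq_zero, ← coeff_zero_eq_constantCoeff_apply] at h
    rw [← h, norm_one] at h0
    linarith
  have hfix : v = 1 + H * v := by
    linear_combination PowerSeries.mul_inv_cancel _ hconst
  have hcoeff : ∀ n, ‖coeff n v‖ ≤
      (if n = 0 then 1 else 0) + ∑ kl ∈ antidiagonal n, ‖coeff kl.1 H‖ * ‖coeff kl.2 v‖ := by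
    intro n
    conv_lhs => rw [hfix, map_add, coeff_mul]
    refine (norm_add_le _ _).trans (add_le_add ?_ ((norm_sum_le _ _).trans ?_))
    · rw [coeff_one]; split_ifs <;> simp
    · exact sum_le_sum fun kl _ => norm_mul_le _ _
  have hpartial : ∀ N, ∑ n ∈ range N, ‖coeff n v‖ ≤ 1 / (1 - A) := by
    intro N
    set S := ∑ n ∈ range N, ‖coeff n v‖
    have hS : S ≤ 1 + A * S := calc
      S ≤ ∑ n ∈ range N, ((if n = 0 then 1 else 0) +
            ∑ kl ∈ antidiagonal n, ‖coeff kl.1 H‖ * ‖coeff kl.2 v‖) := sum_le_sum fun n _ => hcoeff n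
      _ ≤ 1 + (∑ i ∈ range N, ‖coeff i H‖) * S := by
        rw [sum_add_distrib, sum_ite_eq' (range N) 0 fun _ => (1 : ℝ)]
        gcongr
        · split_ifs <;> norm_num
        · exact sum_range_sum_antidiagonal_le_mul (fun i => norm_nonneg (coeff i H))
            (fun j => norm_nonneg (coeff j v)) N
      _ ≤ 1 + A * S := by
        gcongr
        exact hH.sum_le_tsum _ fun _ _ => norm_nonneg _
    rw [le_div_iff₀ (sub_pos.2 hlt)]
    linarith
  exact summable_of_sum_range_le (fun _ => norm_nonneg _) hpartial

lemma norm_coeff_rescale {𝕜 : Type*} [NormedField 𝕜] (a : 𝕜) (φ : 𝕜⟦X⟧) (n : ℕ) :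
    ‖coeff n (rescale a φ)‖ = ‖coeff n φ‖ * ‖a‖ ^ n := by
  rw [coeff_rescale, norm_mul, norm_pow, mul_comm]

lemma exists_one_lt_summable_coeff_mul_inv_one_sub_mul_pow {F H : ℝ⟦X⟧} {R : ℝ} (hR : 1 < R)
    (hF : Summable fun n => ‖coeff n F‖ * R ^ n) (hH : Summable fun n => ‖coeff n H‖ * R ^ n)
    (hH1 : ∑' n, ‖coeff n H‖ < 1) :
    ∃ r, 1 < r ∧ Summable fun n => coeff n (F * (1 - H)⁻¹) * r ^ n := by
  obtain ⟨r, hr1, hrR, hHr⟩ := exists_gt_tsum_mul_pow_lt (a := fun n => ‖coeff n H‖)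
    (by simpa only [norm_norm] using hH) zero_le_one hR (by simpa only [one_pow, mul_one] using hH1)
  have hnorm (φ : ℝ⟦X⟧) (n : ℕ) : ‖coeff n (rescale r φ)‖ = ‖coeff n φ‖ * r ^ n := by
    rw [norm_coeff_rescale, Real.norm_of_nonneg (show 0 ≤ r by linarith)]
  have hsummable {φ : ℝ⟦X⟧} (hφ : Summable fun n => ‖coeff n φ‖ * R ^ n) :
      Summable fun n => ‖coeff n (rescale r φ)‖ := by
    refine hφ.of_nonneg_of_le (fun n => norm_nonneg _) fun n => ?_
    rw [hnorm]
    gcongr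
  have hHr_lt : ∑' n, ‖coeff n (rescale r H)‖ < 1 := by simpa only [hnorm] using hHr
  have hGr : Summable fun n => ‖coeff n (rescale r (F * (1 - H)⁻¹))‖ := by
    rw [map_mul, rescale_inv, map_sub, map_one]
    exact summable_norm_coeff_mul (hsummable hF)
      (summable_norm_coeff_inv_one_sub (hsummable hH) hHr_lt)
  refine ⟨r, hr1, hGr.of_norm.congr fun n => ?_⟩
  rw [coeff_rescale, mul_comm]

end PowerSeries

theorem induced_offspring_distribution_exponential_moments_general
    (p : ℕ → ℝ) (hp : ∀ k, 0 ≤ p k) (hsum : Summable p) (htotal : (∑' k : ℕ, p k) = 1)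
    (Ω : Set ℕ) [DecidablePred (· ∈ Ω)]
    (hPΩ : 0 < ∑' k : ℕ, if k ∈ Ω then p k else 0)
    (F H G : PowerSeries ℝ)
    (hF : F = PowerSeries.mk fun k => if k ∈ Ω then p k else 0)
    (hH : H = PowerSeries.mk fun j => if j + 1 ∈ Ω then (0 : ℝ) else p (j + 1))
    (hG : G = F * (1 - H)⁻¹)
    (hδ : ∃ δ : ℝ, 0 < δ ∧ Summable fun k : ℕ => p k * (1 + δ) ^ k) :
    1 < radiusOfCoeff (fun k => PowerSeries.coeff k G) ∧
    ∃ ε : ℝ, 0 < ε ∧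
      Summable (fun k : ℕ => PowerSeries.coeff k G * (1 + ε) ^ k) := by
  obtain ⟨δ, hδ, hpδ⟩ := hδ
  have hF_le (k : ℕ) : ‖coeff k F‖ ≤ p k := by
    rw [hF, coeff_mk]; split_ifs <;> simp [hp, abs_of_nonneg]
  have hH_norm (j : ℕ) : ‖coeff j H‖ = if j + 1 ∈ Ω then 0 else p (j + 1) := by
    rw [hH, coeff_mk]; split_ifs <;> simp [hp, abs_of_nonneg]
  have hH_le (j : ℕ) : ‖coeff j H‖ ≤ p (j + 1) := by
    rw [hH_norm]; split_ifs <;> simp [hp]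
  have hF_δ : Summable fun k => ‖coeff k F‖ * (1 + δ) ^ k :=
    hpδ.of_nonneg_of_le (fun k => by positivity) fun k => by gcongr; exact hF_le k
  have hH_δ : Summable fun j => ‖coeff j H‖ * (1 + δ) ^ j := by
    refine ((summable_nat_add_iff 1).2 hpδ).of_nonneg_of_le (fun j => by positivity) fun j => ?_
    exact mul_le_mul (hH_le j) (pow_le_pow_right₀ (by linarith) j.le_succ) (by positivity) (hp _)
  have hH_one : ∑' j, ‖coeff j H‖ < 1 := by
    simpa only [hH_norm, htotal] using tsum_ite_succ_notMem_lt_tsum hp hsum Ω hPΩ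
  obtain ⟨r, hr1, hG_r⟩ :=
    exists_one_lt_summable_coeff_mul_inv_one_sub_mul_pow (by linarith) hF_δ hH_δ hH_one
  rw [← hG] at hG_r
  exact ⟨one_lt_radiusOfCoeff_of_summable hr1 hG_r, r - 1, by linarith, by simpa using hG_r⟩

/-- **Exponential moments of the induced offspring distribution.**
Let `ζ` have law `(p k)` on ℕ with mean one and `p 0 > 0`, and let `Ω ⊊ ℕ` with
`0 ∈ Ω` and `P(ζ ∈ Ω) > 0`.  Let `(q k)` be the coefficients of the formal power series
`G = f/(1 − h)`, where `f(z) = ∑_{k∈Ω} p k z^k` and `h(z) = ∑_{k∈Ωᶜ} p k z^{k−1}`.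
If `E[(1+δ)^ζ] < ∞` for some `δ > 0`, then the radius of convergence of `G` is strictly
greater than `1`; in particular there is `ε > 0` with `∑ q k (1+ε)^k < ∞`. -/
theorem induced_offspring_distribution_exponential_moments
    (p : ℕ → ℝ) (hp : ∀ k, 0 ≤ p k) (hsum : Summable p) (htotal : (∑' k : ℕ, p k) = 1)
    (hp0 : 0 < p 0)
    (hmean_sum : Summable fun k : ℕ => (k : ℝ) * p k)
    (hmean : (∑' k : ℕ, (k : ℝ) * p k) = 1)
    (Ω : Set ℕ) [DecidablePred (· ∈ Ω)] (hΩne : Ω ≠ Set.univ) (h0Ω : 0 ∈ Ω)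
    (hPΩ : 0 < ∑' k : ℕ, if k ∈ Ω then p k else 0)
    (F H G : PowerSeries ℝ)
    (hF : F = PowerSeries.mk fun k => if k ∈ Ω then p k else 0)
    (hH : H = PowerSeries.mk fun j => if j + 1 ∈ Ω then (0 : ℝ) else p (j + 1))
    (hG : G = F * (1 - H)⁻¹)
    (hδ : ∃ δ : ℝ, 0 < δ ∧ Summable fun k : ℕ => p k * (1 + δ) ^ k) :
    1 < radiusOfCoeff (fun k => PowerSeries.coeff k G) ∧
    ∃ ε : ℝ, 0 < ε ∧
      Summable (fun k : ℕ => PowerSeries.coeff k G * (1 + ε) ^ k) :=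
  induced_offspring_distribution_exponential_moments_general p hp hsum htotal Ω hPΩ F H G hF hH hG
    hδ
end
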